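/- arXiv:1205.0074 — 12 statements merged into one kernel-verified Lean document; each statement's English description precedes it below -/
import Mathlib

section
/- Let V be a braided monoidal category with braiding c, A an object of V, and W : A⊗A → A⊗A a morphism. Then W satisfies the fusion equation W₂₃∘W₁₂ = W₁₂∘W₁₃∘W₂₃ (where W₁₂ = W⊗1_A, W₂₃ = 1_A⊗W, and W₁₃ = (c_{A,A}⊗1_A)∘(1_A⊗W)∘(c_{A,A}⊗1_A)⁻¹) if and only if the morphism v = c_{A,A}∘W satisfies the 3-cocycle condition (v⊗1_A)∘(1_A⊗c_{A,A})∘(v⊗1_A) = (1_A⊗v)∘(v⊗1_A)∘(1_A⊗v). -/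
/-!
On `(A ⊗ A) ⊗ A` write `σ₁ = c ⊗ 1` and `σ₂ = 1 ⊗ c`. Naturality of the braiding gives
`W₂₃ σ₁ σ₂ = σ₁ σ₂ W₁₂` and `W₁₂ σ₂ σ₁ = σ₂ σ₁ W₂₃`, and `σ₁ σ₂ σ₁ = σ₂ σ₁ σ₂` is the Yang–Baxter
equation. With these, composing either side of the fusion equation with the invertible
`σ₁ σ₂ σ₁` yields the corresponding side of the 3-cocycle condition for `v = c W`; since that
composite is invertible, the two equations are equivalent.
-/

open CategoryTheory MonoidalCategory

theorem fusion_iff_cocycle_of_braid_relation {C : Type*} [Category C] {X : C}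
    (w₁₂ w₂₃ : X ⟶ X) (s₁ s₂ : X ≅ X)
    (braid : s₁.hom ≫ s₂.hom ≫ s₁.hom = s₂.hom ≫ s₁.hom ≫ s₂.hom)
    (comm₁ : w₂₃ ≫ s₁.hom ≫ s₂.hom = s₁.hom ≫ s₂.hom ≫ w₁₂)
    (comm₂ : w₁₂ ≫ s₂.hom ≫ s₁.hom = s₂.hom ≫ s₁.hom ≫ w₂₃) :
    w₁₂ ≫ w₂₃ = w₂₃ ≫ (s₁.inv ≫ w₂₃ ≫ s₁.hom) ≫ w₁₂ ↔
      (w₁₂ ≫ s₁.hom) ≫ s₂.hom ≫ (w₁₂ ≫ s₁.hom) =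
        (w₂₃ ≫ s₂.hom) ≫ (w₁₂ ≫ s₁.hom) ≫ (w₂₃ ≫ s₂.hom) := by
  have lhs : (w₁₂ ≫ w₂₃) ≫ s₁.hom ≫ s₂.hom ≫ s₁.hom =
      (w₁₂ ≫ s₁.hom) ≫ s₂.hom ≫ (w₁₂ ≫ s₁.hom) := by
    simp only [Category.assoc, reassoc_of% comm₁]
  have rhs : (w₂₃ ≫ (s₁.inv ≫ w₂₃ ≫ s₁.hom) ≫ w₁₂) ≫ s₁.hom ≫ s₂.hom ≫ s₁.hom =
      (w₂₃ ≫ s₂.hom) ≫ (w₁₂ ≫ s₁.hom) ≫ (w₂₃ ≫ s₂.hom) := by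
    simp only [Category.assoc, braid, reassoc_of% comm₂, reassoc_of% comm₁,
      Iso.inv_hom_id_assoc]
  rw [← cancel_mono (s₁.hom ≫ s₂.hom ≫ s₁.hom), lhs, rhs]

section Braided

open BraidedCategory

variable {V : Type*} [Category V] [MonoidalCategory V] [BraidedCategory V]

theorem braiding_tensor_right_naturality (X : V) {Y Z Y' Z' : V} (f : Y ⊗ Z ⟶ Y' ⊗ Z') :
    ((α_ X Y Z).hom ≫ X ◁ f ≫ (α_ X Y' Z').inv) ≫ (β_ X Y').hom ▷ Z' ≫
      (α_ Y' X Z').hom ≫ Y' ◁ (β_ X Z').hom ≫ (α_ Y' Z' X).inv =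
    (β_ X Y).hom ▷ Z ≫ ((α_ Y X Z).hom ≫ Y ◁ (β_ X Z).hom ≫ (α_ Y Z X).inv) ≫ f ▷ X := by
  simpa using (α_ X Y Z).hom ≫= braiding_naturality_right X f

theorem braiding_tensor_left_naturality {X Y X' Y' : V} (f : X ⊗ Y ⟶ X' ⊗ Y') (Z : V) :
    f ▷ Z ≫ ((α_ X' Y' Z).hom ≫ X' ◁ (β_ Y' Z).hom ≫ (α_ X' Z Y').inv) ≫ (β_ X' Z).hom ▷ Y' =
    ((α_ X Y Z).hom ≫ X ◁ (β_ Y Z).hom ≫ (α_ X Z Y).inv) ≫ (β_ X Z).hom ▷ Y ≫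
      (α_ Z X Y).hom ≫ Z ◁ f ≫ (α_ Z X' Y').inv := by
  simpa using braiding_naturality_left f Z =≫ (α_ Z X' Y').inv

theorem yang_baxter_leftAssoc (X Y Z : V) :
    (β_ X Y).hom ▷ Z ≫ ((α_ Y X Z).hom ≫ Y ◁ (β_ X Z).hom ≫ (α_ Y Z X).inv) ≫
      (β_ Y Z).hom ▷ X =
    ((α_ X Y Z).hom ≫ X ◁ (β_ Y Z).hom ≫ (α_ X Z Y).inv) ≫ (β_ X Z).hom ▷ Y ≫
      ((α_ Z X Y).hom ≫ Z ◁ (β_ X Y).hom ≫ (α_ Z Y X).inv) := by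
  simpa using (α_ X Y Z).hom ≫= yang_baxter X Y Z =≫ (α_ Z Y X).inv

end Braided

/-- In a braided monoidal category, a morphism `W : A ⊗ A ⟶ A ⊗ A` satisfies
the fusion equation `W₂₃ ∘ W₁₂ = W₁₂ ∘ W₁₃ ∘ W₂₃` if and only if `v = c_{A,A} ∘ W` satisfies
the 3-cocycle condition.  (All composites are written with explicit associators, which are
suppressed in the informal statement.) -/
theorem fusion_iff_three_cocycle {V : Type*} [Category V] [MonoidalCategory V]
    [BraidedCategory V] (A : V) (W : A ⊗ A ⟶ A ⊗ A) :
    (let W12 : (A ⊗ A) ⊗ A ⟶ (A ⊗ A) ⊗ A := W ▷ A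
     let W23 : (A ⊗ A) ⊗ A ⟶ (A ⊗ A) ⊗ A :=
       (α_ A A A).hom ≫ (A ◁ W) ≫ (α_ A A A).inv
     let W13 : (A ⊗ A) ⊗ A ⟶ (A ⊗ A) ⊗ A :=
       ((β_ A A).inv ▷ A) ≫ (α_ A A A).hom ≫ (A ◁ W) ≫ (α_ A A A).inv ≫
         ((β_ A A).hom ▷ A)
     W12 ≫ W23 = W23 ≫ W13 ≫ W12) ↔
    (let v : A ⊗ A ⟶ A ⊗ A := W ≫ (β_ A A).hom
     (v ▷ A) ≫ (α_ A A A).hom ≫ (A ◁ (β_ A A).hom) ≫ (α_ A A A).inv ≫ (v ▷ A) =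
       (α_ A A A).hom ≫ (A ◁ v) ≫ (α_ A A A).inv ≫ (v ▷ A) ≫
         (α_ A A A).hom ≫ (A ◁ v) ≫ (α_ A A A).inv) := by
  have key := fusion_iff_cocycle_of_braid_relation (W ▷ A)
    ((α_ A A A).hom ≫ A ◁ W ≫ (α_ A A A).inv) (whiskerRightIso (β_ A A) A)
    (α_ A A A ≪≫ whiskerLeftIso A (β_ A A) ≪≫ (α_ A A A).symm)
    (yang_baxter_leftAssoc A A A) (braiding_tensor_right_naturality A W)
    (braiding_tensor_left_naturality W A)
  simpa only [whiskerRightIso_hom, whiskerRightIso_inv, Iso.trans_hom, whiskerLeftIso_hom,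
    Iso.symm_hom, comp_whiskerRight, whiskerLeft_comp, Category.assoc,
    Iso.inv_hom_id_assoc] using key
end

section
/- Let V be a braided monoidal category and (A,v) a lax tricocycloid in V. Define a functor ∗ : V×V → V by X∗Y = A⊗X⊗Y and a natural family α_{X,Y,Z} : (X∗Y)∗Z → X∗(Y∗Z), that is α_{X,Y,Z} : A⊗(A⊗X⊗Y)⊗Z → A⊗X⊗(A⊗Y⊗Z), by α_{X,Y,Z} = (1_A⊗c_{A,X}⊗1_Y⊗1_Z)∘(v⊗1_X⊗1_Y⊗1_Z). Then α satisfies the pentagon axiom for a left skew-monoidal structure: (1_X∗α_{Y,Z,W})∘α_{X,Y∗Z,W}∘(α_{X,Y,Z}∗1_W) = α_{X,Y,Z∗W}∘α_{X∗Y,Z,W}. -/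
open CategoryTheory MonoidalCategory

set_option maxHeartbeats 1000000

variable {V : Type*} [Category V] [MonoidalCategory V] [BraidedCategory V]

/-- The associativity constraint `α_{X,Y,Z} : (X∗Y)∗Z ⟶ X∗(Y∗Z)` of the warped tensor
`X ∗ Y = A ⊗ (X ⊗ Y)`, given by `(1_A ⊗ c_{A,X} ⊗ 1_Y ⊗ 1_Z) ∘ (v ⊗ 1_X ⊗ 1_Y ⊗ 1_Z)`,
written with explicit coherence isomorphisms. -/
def skewAssoc (A : V) (v : A ⊗ A ⟶ A ⊗ A) (X Y Z : V) :
    A ⊗ ((A ⊗ (X ⊗ Y)) ⊗ Z) ⟶ A ⊗ (X ⊗ (A ⊗ (Y ⊗ Z))) :=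
  (A ◁ (α_ A (X ⊗ Y) Z).hom) ≫ (α_ A A ((X ⊗ Y) ⊗ Z)).inv ≫ (v ▷ ((X ⊗ Y) ⊗ Z)) ≫
    (α_ A A ((X ⊗ Y) ⊗ Z)).hom ≫
    (A ◁ ((α_ A (X ⊗ Y) Z).inv ≫
      (((α_ A X Y).inv ≫ ((β_ A X).hom ▷ Y) ≫ (α_ X A Y).hom) ▷ Z) ≫
      (α_ X (A ⊗ Y) Z).hom ≫ (X ◁ (α_ A Y Z).hom)))

/-!
On each side of the pentagon, naturality of the braiding and the hexagon identities slide every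
occurrence of `v` in front of all braidings. What remains is the same braid
`A A A X Y Z W ⟶ A X A Y A Z W` (`skewPentagonBraiding`) on both sides, preceded by the two sides
of the 3-cocycle condition whiskered by `X ⊗ Y ⊗ Z ⊗ W`.
-/

section

variable (A : V) (v : A ⊗ A ⟶ A ⊗ A) (X Y Z W : V)

def skewPentagonBraiding :
    ((A ⊗ A) ⊗ A) ⊗ (X ⊗ (Y ⊗ (Z ⊗ W))) ⟶ A ⊗ (X ⊗ (A ⊗ (Y ⊗ (A ⊗ (Z ⊗ W))))) :=
  𝟙 _ ⊗≫ (A ◁ (A ◁ ((β_ A X).hom ▷ (Y ⊗ (Z ⊗ W))))) ⊗≫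
    (A ◁ ((β_ A X).hom ▷ (A ⊗ (Y ⊗ (Z ⊗ W))))) ⊗≫
    (A ◁ (X ◁ (A ◁ ((β_ A Y).hom ▷ (Z ⊗ W))))) ⊗≫ 𝟙 _

theorem skewAssoc_pentagon_lhs_eq :
    (A ◁ (skewAssoc A v X Y Z ▷ W)) ≫ skewAssoc A v X (A ⊗ (Y ⊗ Z)) W ≫
        (A ◁ (X ◁ skewAssoc A v Y Z W)) =
      𝟙 _ ⊗≫ (((α_ A A A).hom ≫ A ◁ v ≫ (α_ A A A).inv ≫ v ▷ A ≫ (α_ A A A).hom ≫ A ◁ v ≫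
        (α_ A A A).inv) ▷ (X ⊗ (Y ⊗ (Z ⊗ W)))) ≫ skewPentagonBraiding A X Y Z W := by
  calc
    _ = 𝟙 _ ⊗≫ (A ◁ (v ▷ (X ⊗ (Y ⊗ (Z ⊗ W)))))
        ⊗≫ ((A ⊗ A) ◁ ((β_ A X).hom ▷ (Y ⊗ (Z ⊗ W))) ≫ v ▷ ((X ⊗ A) ⊗ (Y ⊗ (Z ⊗ W))))
        ⊗≫ (A ◁ ((β_ A X).hom ▷ (A ⊗ (Y ⊗ (Z ⊗ W)))))
        ⊗≫ (A ◁ (X ◁ (v ▷ (Y ⊗ (Z ⊗ W)))))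
        ⊗≫ (A ◁ (X ◁ (A ◁ ((β_ A Y).hom ▷ (Z ⊗ W))))) ⊗≫ 𝟙 _ := by
      simp only [skewAssoc]; monoidal
    _ = 𝟙 _ ⊗≫ (A ◁ (v ▷ (X ⊗ (Y ⊗ (Z ⊗ W)))))
        ⊗≫ (v ▷ ((A ⊗ X) ⊗ (Y ⊗ (Z ⊗ W))))
        ⊗≫ (A ◁ (((β_ (A ⊗ A) X).hom ≫ X ◁ v) ▷ (Y ⊗ (Z ⊗ W))))
        ⊗≫ (A ◁ (X ◁ (A ◁ ((β_ A Y).hom ▷ (Z ⊗ W))))) ⊗≫ 𝟙 _ := by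
      rw [whisker_exchange, BraidedCategory.braiding_tensor_left_hom]; monoidal
    _ = _ := by
      rw [← BraidedCategory.braiding_naturality_left, BraidedCategory.braiding_tensor_left_hom,
        skewPentagonBraiding]
      monoidal

theorem skewAssoc_pentagon_rhs_eq :
    skewAssoc A v (A ⊗ (X ⊗ Y)) Z W ≫ skewAssoc A v X Y (A ⊗ (Z ⊗ W)) =
      𝟙 _ ⊗≫ ((v ▷ A ≫ (α_ A A A).hom ≫ A ◁ (β_ A A).hom ≫ (α_ A A A).inv ≫ v ▷ A)
        ▷ (X ⊗ (Y ⊗ (Z ⊗ W)))) ≫ skewPentagonBraiding A X Y Z W := by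
  calc
    _ = 𝟙 _ ⊗≫ (v ▷ (A ⊗ (X ⊗ (Y ⊗ (Z ⊗ W)))))
        ⊗≫ (A ◁ ((β_ A A).hom ▷ (X ⊗ (Y ⊗ (Z ⊗ W)))))
        ⊗≫ (A ◁ (A ◁ ((β_ A X).hom ▷ (Y ⊗ (Z ⊗ W)))))
        ⊗≫ ((A ⊗ A) ◁ (X ◁ ((β_ A Y).hom ▷ (Z ⊗ W))) ≫ v ▷ (X ⊗ ((Y ⊗ A) ⊗ (Z ⊗ W))))
        ⊗≫ (A ◁ ((β_ A X).hom ▷ (Y ⊗ (A ⊗ (Z ⊗ W))))) ⊗≫ 𝟙 _ := by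
      simp only [skewAssoc, BraidedCategory.braiding_tensor_right_hom]
      monoidal
    _ = 𝟙 _ ⊗≫ (v ▷ (A ⊗ (X ⊗ (Y ⊗ (Z ⊗ W)))))
        ⊗≫ (A ◁ ((β_ A A).hom ▷ (X ⊗ (Y ⊗ (Z ⊗ W)))))
        ⊗≫ ((A ⊗ A) ◁ ((β_ A X).hom ▷ (Y ⊗ (Z ⊗ W))) ≫ v ▷ ((X ⊗ A) ⊗ (Y ⊗ (Z ⊗ W))))
        ⊗≫ (A ◁ (((A ⊗ X) ◁ ((β_ A Y).hom ▷ (Z ⊗ W))) ≫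
              ((β_ A X).hom ▷ ((Y ⊗ A) ⊗ (Z ⊗ W))))) ⊗≫ 𝟙 _ := by
      rw [whisker_exchange]; monoidal
    _ = _ := by
      rw [whisker_exchange, whisker_exchange, skewPentagonBraiding]; monoidal

end

/-- If `(A, v)` is a lax tricocycloid in a braided monoidal category `V`
(i.e. `v` satisfies the 3-cocycle condition), then the associativity constraint
`α_{X,Y,Z} = (1_A ⊗ c_{A,X} ⊗ 1) ∘ (v ⊗ 1)` for the tensor `X ∗ Y = A ⊗ (X ⊗ Y)` satisfies
the pentagon axiom of a left skew-monoidal structure: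
`(1_X ∗ α_{Y,Z,W}) ∘ α_{X,Y∗Z,W} ∘ (α_{X,Y,Z} ∗ 1_W) = α_{X,Y,Z∗W} ∘ α_{X∗Y,Z,W}`. -/
theorem skewAssoc_pentagon (A : V) (v : A ⊗ A ⟶ A ⊗ A)
    (hv : (v ▷ A) ≫ (α_ A A A).hom ≫ (A ◁ (β_ A A).hom) ≫ (α_ A A A).inv ≫ (v ▷ A) =
      (α_ A A A).hom ≫ (A ◁ v) ≫ (α_ A A A).inv ≫ (v ▷ A) ≫
        (α_ A A A).hom ≫ (A ◁ v) ≫ (α_ A A A).inv)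
    (X Y Z W : V) :
    (A ◁ (skewAssoc A v X Y Z ▷ W)) ≫ skewAssoc A v X (A ⊗ (Y ⊗ Z)) W ≫
        (A ◁ (X ◁ skewAssoc A v Y Z W)) =
      skewAssoc A v (A ⊗ (X ⊗ Y)) Z W ≫ skewAssoc A v X Y (A ⊗ (Z ⊗ W)) := by
  rw [skewAssoc_pentagon_lhs_eq, skewAssoc_pentagon_rhs_eq, hv]
end

section
/- Let V be a braided monoidal category and A an object of V. The assignments of the previous two constructions are mutually inverse. Precisely: (i) if (A, μ, η, δ, ε) is a bimonoid in V with respect to the inverse braiding and v = c_{A,A}∘(1_A⊗μ)∘(δ⊗1_A), then (1_A⊗ε)∘v = μ and c_{A,A}⁻¹∘v∘(1_A⊗η) = δ; (ii) if (A,v,η,ε) is an augmented lax tricocycloid, and μ = (1_A⊗ε)∘v, δ = c_{A,A}⁻¹∘v∘(1_A⊗η), then c_{A,A}∘(1_A⊗μ)∘(δ⊗1_A) = v. Hence there is a bijection between bimonoid structures on A with respect to the inverse braiding and augmented lax tricocycloid structures on A. -/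
open CategoryTheory MonoidalCategory

open CategoryTheory MonoidalCategory

variable {V : Type*} [Category V] [MonoidalCategory V] [BraidedCategory V]

/-- A bimonoid in `V` with respect to the inverse braiding: a monoid structure `(μ, η)`
and a comonoid structure `(δ, ε)` satisfying the four bimonoid compatibility axioms, the
middle interchange using the inverse braiding `c⁻¹`. -/
def IsBimonoidInv (A : V) (μ : A ⊗ A ⟶ A) (η : 𝟙_ V ⟶ A) (δ : A ⟶ A ⊗ A)
    (ε : A ⟶ 𝟙_ V) : Prop :=
  ((μ ▷ A) ≫ μ = (α_ A A A).hom ≫ (A ◁ μ) ≫ μ) ∧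
  ((η ▷ A) ≫ μ = (λ_ A).hom) ∧
  ((A ◁ η) ≫ μ = (ρ_ A).hom) ∧
  (δ ≫ (δ ▷ A) ≫ (α_ A A A).hom = δ ≫ (A ◁ δ)) ∧
  (δ ≫ (ε ▷ A) = (λ_ A).inv) ∧
  (δ ≫ (A ◁ ε) = (ρ_ A).inv) ∧
  (η ≫ ε = 𝟙 (𝟙_ V)) ∧
  (μ ≫ ε = (ε ⊗ₘ ε) ≫ (λ_ (𝟙_ V)).hom) ∧
  (η ≫ δ = (λ_ (𝟙_ V)).inv ≫ (η ⊗ₘ η)) ∧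
  (μ ≫ δ = (δ ⊗ₘ δ) ≫ (α_ A A (A ⊗ A)).hom ≫
     (A ◁ ((α_ A A A).inv ≫ ((β_ A A).inv ▷ A) ≫ (α_ A A A).hom)) ≫
     (α_ A A (A ⊗ A)).inv ≫ (μ ⊗ₘ μ))

/-- An augmented lax tricocycloid: `v` satisfies the 3-cocycle condition and `(η, ε)` is
an augmentation for `(A, v)`. -/
def IsAugTricocycloid (A : V) (v : A ⊗ A ⟶ A ⊗ A) (η : 𝟙_ V ⟶ A)
    (ε : A ⟶ 𝟙_ V) : Prop :=
  ((v ▷ A) ≫ (α_ A A A).hom ≫ (A ◁ (β_ A A).hom) ≫ (α_ A A A).inv ≫ (v ▷ A) =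
    (α_ A A A).hom ≫ (A ◁ v) ≫ (α_ A A A).inv ≫ (v ▷ A) ≫
      (α_ A A A).hom ≫ (A ◁ v) ≫ (α_ A A A).inv) ∧
  ((ρ_ A).inv ≫ (A ◁ η) ≫ v ≫ (A ◁ ε) ≫ (ρ_ A).hom = 𝟙 A) ∧
  (v ≫ (ε ▷ A) ≫ (λ_ A).hom = (A ◁ ε) ≫ (ρ_ A).hom) ∧
  ((λ_ A).inv ≫ (η ▷ A) ≫ v = (ρ_ A).inv ≫ (A ◁ η)) ∧
  (η ≫ ε = 𝟙 (𝟙_ V))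

/-!
In (i) each composite collapses by a single (co)unit law: `ε` slides through the braiding to
meet `δ`, and `η` meets `μ` once `c⁻¹` cancels `c`. For (ii), insert `η` into the middle strand
of the 3-cocycle condition and apply `ε` to the middle strand afterwards. The augmentation
axioms collapse the right-hand side to `v`, while the left-hand side becomes
`(μ ⊗ 1) ∘ (1 ⊗ c) ∘ ((c ∘ δ) ⊗ 1)`, which a hexagon identity turns into `c ∘ (1 ⊗ μ) ∘ (δ ⊗ 1)`.
-/

universe v u

section Monoidal

variable {C : Type u} [Category.{v} C] [MonoidalCategory C] {A : C}

def mulOfTricocycloid (v : A ⊗ A ⟶ A ⊗ A) (ε : A ⟶ 𝟙_ C) : A ⊗ A ⟶ A :=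
  v ≫ (A ◁ ε) ≫ (ρ_ A).hom

theorem cocycle_rhs_unit_counit_middle_eq {v : A ⊗ A ⟶ A ⊗ A} {η : 𝟙_ C ⟶ A}
    {ε : A ⟶ 𝟙_ C} (hvε : v ≫ (ε ▷ A) ≫ (λ_ A).hom = (A ◁ ε) ≫ (ρ_ A).hom)
    (hηv : (λ_ A).inv ≫ (η ▷ A) ≫ v = (ρ_ A).inv ≫ (A ◁ η)) (hηε : η ≫ ε = 𝟙 (𝟙_ C)) :
    ((ρ_ A).inv ▷ A) ≫ ((A ◁ η) ▷ A) ≫ (α_ A A A).hom ≫ (A ◁ v) ≫ (α_ A A A).inv ≫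
      (v ▷ A) ≫ (α_ A A A).hom ≫ (A ◁ v) ≫ (α_ A A A).inv ≫ ((A ◁ ε) ▷ A) ≫
        ((ρ_ A).hom ▷ A) = v := by
  have unit_middle : ((ρ_ A).inv ▷ A) ≫ ((A ◁ η) ▷ A) ≫ (α_ A A A).hom ≫ (A ◁ v) =
      A ◁ ((ρ_ A).inv ≫ (A ◁ η)) := by
    rw [← hηv]; monoidal
  have counit_middle : (A ◁ v) ≫ (α_ A A A).inv ≫ ((A ◁ ε) ▷ A) ≫ ((ρ_ A).hom ▷ A) =
      A ◁ ((A ◁ ε) ≫ (ρ_ A).hom) := by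
    rw [← hvε]; monoidal
  rw [reassoc_of% unit_middle, counit_middle]
  calc _ = (ρ_ _).inv ≫ ((A ⊗ A) ◁ η) ≫ (v ▷ A) ≫ ((A ⊗ A) ◁ ε) ≫ (ρ_ _).hom := by monoidal
    _ = (ρ_ _).inv ≫ (v ▷ 𝟙_ C) ≫ ((A ⊗ A) ◁ (η ≫ ε)) ≫ (ρ_ _).hom := by
      rw [whisker_exchange_assoc, MonoidalCategory.whiskerLeft_comp_assoc]
    _ = v := by simp [hηε]

end Monoidal

section Braided

variable {C : Type u} [Category.{v} C] [MonoidalCategory C] [BraidedCategory C] {A : C}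

theorem braiding_inv_whiskerRight_comp_braiding {X Y Z W : C} (m : X ⊗ Z ⟶ W) :
    ((β_ Y X).inv ▷ Z) ≫ (α_ Y X Z).hom ≫ (Y ◁ m) ≫ (β_ Y W).hom =
      (α_ X Y Z).hom ≫ (X ◁ (β_ Y Z).hom) ≫ (α_ X Z Y).inv ≫ (m ▷ Y) := by
  rw [BraidedCategory.braiding_naturality_right, BraidedCategory.braiding_tensor_right_hom]
  simp

def tricocycloidOfBimonoid (μ : A ⊗ A ⟶ A) (δ : A ⟶ A ⊗ A) : A ⊗ A ⟶ A ⊗ A :=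
  (δ ▷ A) ≫ (α_ A A A).hom ≫ (A ◁ μ) ≫ (β_ A A).hom

def comulOfTricocycloid (v : A ⊗ A ⟶ A ⊗ A) (η : 𝟙_ C ⟶ A) : A ⟶ A ⊗ A :=
  (ρ_ A).inv ≫ (A ◁ η) ≫ v ≫ (β_ A A).inv

theorem mulOfTricocycloid_tricocycloidOfBimonoid {μ : A ⊗ A ⟶ A} {δ : A ⟶ A ⊗ A}
    {ε : A ⟶ 𝟙_ C} (hδε : δ ≫ (ε ▷ A) = (λ_ A).inv) :
    mulOfTricocycloid (tricocycloidOfBimonoid μ δ) ε = μ := by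
  calc mulOfTricocycloid (tricocycloidOfBimonoid μ δ) ε
      = (δ ▷ A) ≫ (α_ A A A).hom ≫ (A ◁ μ) ≫ (ε ▷ A) ≫ (λ_ A).hom := by
        simp only [mulOfTricocycloid, tricocycloidOfBimonoid, Category.assoc,
          ← BraidedCategory.braiding_naturality_left_assoc, braiding_rightUnitor]
    _ = ((δ ≫ (ε ▷ A)) ▷ A) ≫ (α_ _ A A).hom ≫ (λ_ _).hom ≫ μ := by
        rw [whisker_exchange_assoc]; monoidal
    _ = μ := by rw [hδε]; monoidal

theorem comulOfTricocycloid_tricocycloidOfBimonoid {μ : A ⊗ A ⟶ A} {η : 𝟙_ C ⟶ A}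
    {δ : A ⟶ A ⊗ A} (hημ : (A ◁ η) ≫ μ = (ρ_ A).hom) :
    comulOfTricocycloid (tricocycloidOfBimonoid μ δ) η = δ := by
  calc comulOfTricocycloid (tricocycloidOfBimonoid μ δ) η
      = (ρ_ A).inv ≫ (δ ▷ 𝟙_ C) ≫ ((A ⊗ A) ◁ η) ≫ (α_ A A A).hom ≫ (A ◁ μ) := by
        simp [comulOfTricocycloid, tricocycloidOfBimonoid, whisker_exchange_assoc]
    _ = δ ≫ (ρ_ _).inv ≫ (α_ A A _).hom ≫ (A ◁ ((A ◁ η) ≫ μ)) := by monoidal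
    _ = δ := by rw [hημ]; monoidal

theorem tricocycloidOfBimonoid_mulOfTricocycloid_comulOfTricocycloid {v : A ⊗ A ⟶ A ⊗ A}
    {η : 𝟙_ C ⟶ A} {ε : A ⟶ 𝟙_ C}
    (hcocycle : (v ▷ A) ≫ (α_ A A A).hom ≫ (A ◁ (β_ A A).hom) ≫ (α_ A A A).inv ≫ (v ▷ A) =
      (α_ A A A).hom ≫ (A ◁ v) ≫ (α_ A A A).inv ≫ (v ▷ A) ≫
        (α_ A A A).hom ≫ (A ◁ v) ≫ (α_ A A A).inv)
    (hvε : v ≫ (ε ▷ A) ≫ (λ_ A).hom = (A ◁ ε) ≫ (ρ_ A).hom)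
    (hηv : (λ_ A).inv ≫ (η ▷ A) ≫ v = (ρ_ A).inv ≫ (A ◁ η)) (hηε : η ≫ ε = 𝟙 (𝟙_ C)) :
    tricocycloidOfBimonoid (mulOfTricocycloid v ε) (comulOfTricocycloid v η) = v := by
  calc tricocycloidOfBimonoid (mulOfTricocycloid v ε) (comulOfTricocycloid v η)
      = ((ρ_ A).inv ▷ A) ≫ ((A ◁ η) ▷ A) ≫ (v ▷ A) ≫ (((β_ A A).inv ▷ A) ≫
          (α_ A A A).hom ≫ (A ◁ mulOfTricocycloid v ε) ≫ (β_ A A).hom) := by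
        simp only [tricocycloidOfBimonoid, comulOfTricocycloid, comp_whiskerRight,
          Category.assoc]
    _ = ((ρ_ A).inv ▷ A) ≫ ((A ◁ η) ▷ A) ≫ ((v ▷ A) ≫ (α_ A A A).hom ≫
          (A ◁ (β_ A A).hom) ≫ (α_ A A A).inv ≫ (v ▷ A)) ≫ ((A ◁ ε) ▷ A) ≫
            ((ρ_ A).hom ▷ A) := by
        rw [braiding_inv_whiskerRight_comp_braiding]
        simp only [mulOfTricocycloid, comp_whiskerRight, Category.assoc]
    _ = v := by
        rw [hcocycle]
        simpa only [Category.assoc] using cocycle_rhs_unit_counit_middle_eq hvε hηv hηε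

end Braided

/-- The constructions
`(μ, η, δ, ε) ↦ (v = c ∘ (1⊗μ) ∘ (δ⊗1), η, ε)` and
`(v, η, ε) ↦ (μ = (1⊗ε) ∘ v, η, δ = c⁻¹ ∘ v ∘ (1⊗η), ε)`
between bimonoid structures on `A` (with respect to the inverse braiding) and augmented
lax tricocycloid structures on `A` are mutually inverse:
(i) starting from a bimonoid, recovering `μ` and `δ` from `v` gives back `μ` and `δ`;
(ii) starting from an augmented lax tricocycloid, rebuilding `v` from `μ` and `δ`
gives back `v`.  Hence the two kinds of structure are in bijection. -/
theorem bimonoid_tricocycloid_bijection (A : V) :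
    (∀ (μ : A ⊗ A ⟶ A) (η : 𝟙_ V ⟶ A) (δ : A ⟶ A ⊗ A) (ε : A ⟶ 𝟙_ V),
      IsBimonoidInv A μ η δ ε →
        (((δ ▷ A) ≫ (α_ A A A).hom ≫ (A ◁ μ) ≫ (β_ A A).hom) ≫
            (A ◁ ε) ≫ (ρ_ A).hom = μ ∧
         (ρ_ A).inv ≫ (A ◁ η) ≫
            ((δ ▷ A) ≫ (α_ A A A).hom ≫ (A ◁ μ) ≫ (β_ A A).hom) ≫ (β_ A A).inv = δ)) ∧
    (∀ (v : A ⊗ A ⟶ A ⊗ A) (η : 𝟙_ V ⟶ A) (ε : A ⟶ 𝟙_ V),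
      IsAugTricocycloid A v η ε →
        (((ρ_ A).inv ≫ (A ◁ η) ≫ v ≫ (β_ A A).inv) ▷ A) ≫ (α_ A A A).hom ≫
            (A ◁ (v ≫ (A ◁ ε) ≫ (ρ_ A).hom)) ≫ (β_ A A).hom = v) := by
  refine ⟨fun μ η δ ε ⟨_, _, hημ, _, hδε, _⟩ => ⟨?_, ?_⟩,
    fun v η ε ⟨hcocycle, _, hvε, hηv, hηε⟩ => ?_⟩
  · exact mulOfTricocycloid_tricocycloidOfBimonoid hδε
  · exact comulOfTricocycloid_tricocycloidOfBimonoid hημ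
  · exact tricocycloidOfBimonoid_mulOfTricocycloid_comulOfTricocycloid hcocycle hvε hηv hηε
end

section
/- Let V be a braided monoidal category and let (A, μ, η, δ, ε) be a bimonoid in V with respect to the inverse braiding, with corresponding lax tricocycloid operator v = c_{A,A}∘(1_A⊗μ)∘(δ⊗1_A). Then the bimonoid is a Hopf monoid (i.e. admits an antipode s : A → A with μ∘(s⊗1_A)∘δ = η∘ε = μ∘(1_A⊗s)∘δ) if and only if v is invertible. -/
/-!
Write `H = (1 ⊗ μ)(δ ⊗ 1)`, `a ⊗ b ↦ a₁ ⊗ a₂b`, so that `v = c H`; since `c` is invertible, only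
`H` matters. Morphisms `A ⊗ X ⟶ A ⊗ Y` of cofree left `A`-comodules are exactly the maps
`a ⊗ x ↦ a₁ ⊗ f(a₂ ⊗ x)`, and `f` is recovered by applying `ε ⊗ 1`. An antipode `s` gives the
inverse `a ⊗ b ↦ a₁ ⊗ s(a₂)b` of `H`: the two composites are `a ⊗ b ↦ a₁ ⊗ ε(a₂)b` by the two
antipode equations. Conversely, `H` is a morphism of cofree left comodules and of free right
`A`-modules, hence so is `H⁻¹`; so `H⁻¹` is `a ⊗ b ↦ a₁ ⊗ t(a₂ ⊗ b)` with `t` right `A`-linear,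
i.e. `t(a ⊗ b) = s(a)b` for `s = t(- ⊗ 1)`, and `s` is an antipode.
-/

open CategoryTheory MonoidalCategory

variable {V : Type*} [Category V] [MonoidalCategory V] [BraidedCategory V]

section Fusion

variable {C : Type*} [Category C] [MonoidalCategory C]

open scoped MonObj ComonObj

section Cofree

variable {A : C} [ComonObj A] {X Y Z : C}

/-- `a ⊗ x ↦ a₁ ⊗ f(a₂ ⊗ x)`; `cofreeLift μ` is the fusion operator `H`. -/
def cofreeLift (f : A ⊗ X ⟶ Y) : A ⊗ X ⟶ A ⊗ Y :=
  Δ[A] ▷ X ≫ (α_ A A X).hom ≫ A ◁ f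

lemma cofreeLift_comp (f : A ⊗ X ⟶ Y) (g : Y ⟶ Z) :
    cofreeLift (f ≫ g) = cofreeLift f ≫ A ◁ g := by
  simp [cofreeLift]

lemma cofreeLift_comp_counit (f : A ⊗ X ⟶ Y) :
    cofreeLift f ≫ ε[A] ▷ Y ≫ (λ_ Y).hom = f := by
  rw [cofreeLift, Category.assoc, Category.assoc, whisker_exchange_assoc,
    ← associator_naturality_left_assoc, ← comp_whiskerRight_assoc, ComonObj.counit_comul,
    leftUnitor_naturality]
  monoidal

lemma cofreeLift_counit : cofreeLift (ε[A] ▷ X ≫ (λ_ X).hom) = 𝟙 (A ⊗ X) := by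
  rw [cofreeLift, MonoidalCategory.whiskerLeft_comp, ← associator_naturality_middle_assoc,
    ← comp_whiskerRight_assoc, ComonObj.comul_counit]
  monoidal

lemma cofreeLift_injective : Function.Injective (cofreeLift : (A ⊗ X ⟶ Y) → _) :=
  fun f g h => by rw [← cofreeLift_comp_counit f, h, cofreeLift_comp_counit]

lemma cofreeLift_eq_id_iff (f : A ⊗ X ⟶ X) :
    cofreeLift f = 𝟙 (A ⊗ X) ↔ f = ε[A] ▷ X ≫ (λ_ X).hom := by
  rw [← cofreeLift_counit, cofreeLift_injective.eq_iff]

lemma cofreeLift_comp_cofreeLift (f : A ⊗ X ⟶ Y) (g : A ⊗ Y ⟶ Z) :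
    cofreeLift f ≫ cofreeLift g = cofreeLift (cofreeLift f ≫ g) := by
  have coassoc : Δ[A] ≫ Δ[A] ▷ A = Δ[A] ≫ A ◁ Δ[A] ≫ (α_ A A A).inv := by
    simp
  have pentagon : (α_ A A A).inv ▷ X ≫ (α_ (A ⊗ A) A X).hom ≫ (α_ A A (A ⊗ X)).hom
      = (α_ A (A ⊗ A) X).hom ≫ A ◁ (α_ A A X).hom := by monoidal
  simp only [cofreeLift, Category.assoc]
  rw [whisker_exchange_assoc Δ[A] f, ← associator_naturality_left_assoc Δ[A] A X]
  slice_lhs 1 2 => rw [← comp_whiskerRight, coassoc]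
  rw [comp_whiskerRight, comp_whiskerRight]
  slice_lhs 5 6 => rw [associator_naturality_right A A f]
  slice_lhs 3 5 => rw [pentagon]
  slice_lhs 2 3 => rw [associator_naturality_middle A Δ[A] X]
  simp only [Category.assoc, MonoidalCategory.whiskerLeft_comp]

lemma eq_cofreeLift_of_comm {φ : A ⊗ X ⟶ A ⊗ Y}
    (hφ : φ ≫ cofreeLift (𝟙 _) = cofreeLift (𝟙 _) ≫ A ◁ φ) :
    φ = cofreeLift (φ ≫ ε[A] ▷ Y ≫ (λ_ Y).hom) := by
  calc φ = φ ≫ cofreeLift (𝟙 _) ≫ A ◁ (ε[A] ▷ Y ≫ (λ_ Y).hom) := by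
        rw [← cofreeLift_comp, Category.id_comp, cofreeLift_counit, Category.comp_id]
    _ = cofreeLift (φ ≫ ε[A] ▷ Y ≫ (λ_ Y).hom) := by
        rw [reassoc_of% hφ, ← MonoidalCategory.whiskerLeft_comp, ← cofreeLift_comp,
          Category.id_comp]

end Cofree

variable {A : C} [MonObj A] {X Y : C}

def evalOne (t : X ⊗ A ⟶ Y) : X ⟶ Y :=
  (ρ_ X).inv ≫ X ◁ η[A] ≫ t

lemma evalOne_whiskerRight_mul (x : X ⟶ A) : evalOne (x ▷ A ≫ μ) = x := by
  rw [evalOne, whisker_exchange_assoc, MonObj.mul_one, ← rightUnitor_inv_naturality_assoc,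
    Iso.inv_hom_id, Category.comp_id]

lemma whiskerRight_mul_injective : Function.Injective (fun x : X ⟶ A => x ▷ A ≫ μ) :=
  fun x y h => by
    rw [← evalOne_whiskerRight_mul x, ← evalOne_whiskerRight_mul y]
    exact congrArg evalOne h

lemma eq_evalOne_whiskerRight_mul {t : X ⊗ A ⟶ A}
    (ht : t ▷ A ≫ μ = (α_ X A A).hom ≫ X ◁ μ ≫ t) : t = evalOne t ▷ A ≫ μ := by
  rw [evalOne, comp_whiskerRight, comp_whiskerRight, Category.assoc, Category.assoc, ht,
    associator_naturality_middle_assoc, ← MonoidalCategory.whiskerLeft_comp_assoc, MonObj.one_mul]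
  monoidal

variable [ComonObj A]

lemma cofreeLift_mul_comp_whiskerRight_mul (s : A ⟶ A) :
    cofreeLift μ[A] ≫ s ▷ A ≫ μ = (Δ[A] ≫ s ▷ A ≫ μ) ▷ A ≫ μ := by
  rw [cofreeLift, Category.assoc, Category.assoc, whisker_exchange_assoc,
    ← associator_naturality_left_assoc, ← MonObj.mul_assoc]
  simp only [comp_whiskerRight, Category.assoc]

lemma cofreeLift_whiskerRight_mul_comp_mul (s : A ⟶ A) :
    cofreeLift (s ▷ A ≫ μ[A]) ≫ μ = (Δ[A] ≫ A ◁ s ≫ μ) ▷ A ≫ μ := by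
  rw [cofreeLift, MonoidalCategory.whiskerLeft_comp, Category.assoc, Category.assoc,
    Category.assoc, ← associator_naturality_middle_assoc, ← MonObj.mul_assoc]
  simp only [comp_whiskerRight, Category.assoc]

lemma counit_whiskerRight_comp_leftUnitor :
    ε[A] ▷ A ≫ (λ_ A).hom = (ε[A] ≫ η[A]) ▷ A ≫ μ := by
  rw [comp_whiskerRight_assoc, MonObj.one_mul]

lemma cofreeLift_mul_comp_cofreeLift_eq_id_iff (s : A ⟶ A) :
    cofreeLift μ[A] ≫ cofreeLift (s ▷ A ≫ μ) = 𝟙 (A ⊗ A) ↔ Δ[A] ≫ s ▷ A ≫ μ = ε ≫ η := by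
  rw [cofreeLift_comp_cofreeLift, cofreeLift_eq_id_iff, cofreeLift_mul_comp_whiskerRight_mul,
    counit_whiskerRight_comp_leftUnitor]
  exact whiskerRight_mul_injective.eq_iff

lemma cofreeLift_comp_cofreeLift_mul_eq_id_iff (s : A ⟶ A) :
    cofreeLift (s ▷ A ≫ μ[A]) ≫ cofreeLift μ = 𝟙 (A ⊗ A) ↔ Δ[A] ≫ A ◁ s ≫ μ = ε ≫ η := by
  rw [cofreeLift_comp_cofreeLift, cofreeLift_eq_id_iff, cofreeLift_whiskerRight_mul_comp_mul,
    counit_whiskerRight_comp_leftUnitor]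
  exact whiskerRight_mul_injective.eq_iff

lemma cofreeLift_mul_comp_cofreeLift_id :
    cofreeLift μ[A] ≫ cofreeLift (𝟙 (A ⊗ A)) = cofreeLift (𝟙 (A ⊗ A)) ≫ A ◁ cofreeLift μ[A] := by
  rw [cofreeLift_comp_cofreeLift, Category.comp_id, ← cofreeLift_comp, Category.id_comp]

lemma whiskerRight_cofreeLift_mul_comp :
    cofreeLift μ[A] ▷ A ≫ (α_ A A A).hom ≫ A ◁ μ = (α_ A A A).hom ≫ A ◁ μ ≫ cofreeLift μ[A] := by
  rw [cofreeLift, whisker_exchange_assoc Δ[A] μ[A],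
    ← associator_naturality_left_assoc, associator_naturality_right_assoc,
    comp_whiskerRight, comp_whiskerRight, Category.assoc, Category.assoc,
    associator_naturality_middle_assoc, ← MonoidalCategory.whiskerLeft_comp, MonObj.mul_assoc,
    ← pentagon_assoc]
  simp only [MonoidalCategory.whiskerLeft_comp]

lemma whiskerRight_counit_comp_mul :
    (ε[A] ▷ A ≫ (λ_ A).hom) ▷ A ≫ μ = (α_ A A A).hom ≫ A ◁ μ ≫ ε[A] ▷ A ≫ (λ_ A).hom := by
  rw [whisker_exchange_assoc, ← associator_naturality_left_assoc, leftUnitor_naturality]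
  monoidal

lemma inv_cofreeLift_mul [IsIso (cofreeLift μ[A])] :
    inv (cofreeLift μ[A]) =
      cofreeLift (evalOne (inv (cofreeLift μ[A]) ≫ ε[A] ▷ A ≫ (λ_ A).hom) ▷ A ≫ μ) := by
  set H := cofreeLift μ[A]
  have inv_colinear : inv H ≫ cofreeLift (𝟙 (A ⊗ A)) = cofreeLift (𝟙 (A ⊗ A)) ≫ A ◁ inv H := by
    rw [IsIso.inv_comp_eq, reassoc_of% cofreeLift_mul_comp_cofreeLift_id]
    simp
  have inv_linear : inv H ▷ A ≫ (α_ A A A).hom ≫ A ◁ μ = (α_ A A A).hom ≫ A ◁ μ ≫ inv H := by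
    rw [← inv_whiskerRight, IsIso.inv_comp_eq, reassoc_of% whiskerRight_cofreeLift_mul_comp]
    simp [H]
  calc inv H = cofreeLift (inv H ≫ ε[A] ▷ A ≫ (λ_ A).hom) := eq_cofreeLift_of_comm inv_colinear
    _ = _ := by
      congr 1
      refine eq_evalOne_whiskerRight_mul ?_
      rw [comp_whiskerRight_assoc, whiskerRight_counit_comp_mul, reassoc_of% inv_linear]

lemma exists_antipode_iff_isIso_cofreeLift_mul :
    (∃ s : A ⟶ A, Δ[A] ≫ s ▷ A ≫ μ = ε ≫ η ∧ Δ[A] ≫ A ◁ s ≫ μ = ε ≫ η) ↔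
      IsIso (cofreeLift μ[A]) := by
  constructor
  · rintro ⟨s, hleft, hright⟩
    exact ⟨cofreeLift (s ▷ A ≫ μ), (cofreeLift_mul_comp_cofreeLift_eq_id_iff s).2 hleft,
      (cofreeLift_comp_cofreeLift_mul_eq_id_iff s).2 hright⟩
  · intro _
    refine ⟨evalOne (inv (cofreeLift μ[A]) ≫ ε[A] ▷ A ≫ (λ_ A).hom),
      (cofreeLift_mul_comp_cofreeLift_eq_id_iff _).1 ?_,
      (cofreeLift_comp_cofreeLift_mul_eq_id_iff _).1 ?_⟩
    · rw [← inv_cofreeLift_mul, IsIso.hom_inv_id]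
    · rw [← inv_cofreeLift_mul, IsIso.inv_hom_id]

end Fusion

/-- A bimonoid `(A, μ, η, δ, ε)` in `V` with respect to the inverse
braiding is Hopf (i.e. admits an antipode `s` with `μ∘(s⊗1)∘δ = η∘ε = μ∘(1⊗s)∘δ`) if and
only if the corresponding lax tricocycloid operator `v = c_{A,A}∘(1_A⊗μ)∘(δ⊗1_A)` is
invertible. -/
theorem hopf_iff_fusion_invertible (A : V) (μ : A ⊗ A ⟶ A) (η : 𝟙_ V ⟶ A)
    (δ : A ⟶ A ⊗ A) (ε : A ⟶ 𝟙_ V) (h : IsBimonoidInv A μ η δ ε) :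
    (∃ s : A ⟶ A, δ ≫ (s ▷ A) ≫ μ = ε ≫ η ∧ δ ≫ (A ◁ s) ≫ μ = ε ≫ η) ↔
      IsIso ((δ ▷ A) ≫ (α_ A A A).hom ≫ (A ◁ μ) ≫ (β_ A A).hom) := by
  obtain ⟨mul_assoc, one_mul, mul_one, comul_assoc, counit_comul, comul_counit, -⟩ := h
  let : MonObj A := ⟨η, μ, one_mul, mul_one, mul_assoc⟩
  let : ComonObj A := ⟨ε, δ, counit_comul, comul_counit, comul_assoc.symm⟩
  have fusion_eq : (δ ▷ A) ≫ (α_ A A A).hom ≫ (A ◁ μ) ≫ (β_ A A).hom =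
      cofreeLift μ ≫ (β_ A A).hom := by
    simp only [cofreeLift, Category.assoc]
    rfl
  rw [fusion_eq, isIso_comp_right_iff]
  exact exists_antipode_iff_isIso_cofreeLift_mul
end

section
/- Let V be a braided monoidal category with unit object I and let (A,v,η,ε) be an augmented lax tricocycloid in V. Then the following data form a skew left warping of the monoidal category V: the functor T = A⊗− : V → V; the object K = I; the natural family v_{X,Y} = (1_A⊗c_{A,X}⊗1_Y)∘(v⊗1_X⊗1_Y) : A⊗A⊗X⊗Y → A⊗X⊗A⊗Y; the morphism v₀ = ε : A → I (composed with the unit isomorphism A⊗I ≅ A); and the natural family k_X = η⊗1_X : X → A⊗X (composed with the unit isomorphism A⊗X ≅ A⊗X⊗I). That is, the five skew left warping axioms (W1)–(W5) hold. -/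
open CategoryTheory MonoidalCategory

variable {V : Type*} [Category V] [MonoidalCategory V]

/-- A skew left warping of the monoidal category `V` (Lack–Street, following Booker–Street):
a functor `T`, an object `K`, natural families `v_{X,Y} : T(TX ⊗ Y) ⟶ TX ⊗ TY` and
`k_X : X ⟶ TX ⊗ K`, and a morphism `v₀ : TK ⟶ I`, satisfying the five warping axioms
(W1)–(W5). -/
def IsSkewLeftWarping (T : V ⥤ V) (K : V)
    (v : ∀ X Y : V, T.obj (T.obj X ⊗ Y) ⟶ T.obj X ⊗ T.obj Y)
    (v₀ : T.obj K ⟶ 𝟙_ V) (k : ∀ X : V, X ⟶ T.obj X ⊗ K) : Prop :=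
  -- naturality of v
  (∀ (X X' Y Y' : V) (f : X ⟶ X') (g : Y ⟶ Y'),
    T.map (T.map f ⊗ₘ g) ≫ v X' Y' = v X Y ≫ (T.map f ⊗ₘ T.map g)) ∧
  -- naturality of k
  (∀ (X X' : V) (f : X ⟶ X'), f ≫ k X' = k X ≫ (T.map f ▷ K)) ∧
  -- (W1)
  (∀ X Y Z : V,
    v (T.obj X ⊗ Y) Z ≫ (v X Y ▷ T.obj Z) ≫ (α_ (T.obj X) (T.obj Y) (T.obj Z)).hom =
      T.map (v X Y ▷ Z) ≫ T.map (α_ (T.obj X) (T.obj Y) Z).hom ≫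
        v X (T.obj Y ⊗ Z) ≫ (T.obj X ◁ v Y Z)) ∧
  -- (W2)
  (∀ Y : V,
    v K Y ≫ (v₀ ▷ T.obj Y) ≫ (λ_ (T.obj Y)).hom =
      T.map (v₀ ▷ Y) ≫ T.map (λ_ Y).hom) ∧
  -- (W3)
  (∀ X : V, T.map (k X) ≫ v X K ≫ (T.obj X ◁ v₀) = (ρ_ (T.obj X)).inv) ∧
  -- (W4)
  (∀ X Y : V,
    k (T.obj X ⊗ Y) ≫ (v X Y ▷ K) ≫ (α_ (T.obj X) (T.obj Y) K).hom =
      T.obj X ◁ k Y) ∧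
  -- (W5)
  (k K ≫ (v₀ ▷ K) ≫ (λ_ K).hom = 𝟙 K)

/-!
Write `u_X = twist A v X : A ⊗ (A ⊗ X) ⟶ (A ⊗ X) ⊗ A` for `(1_A ⊗ c_{A,X}) ∘ (v ⊗ 1_X)`, so
that the warping is `v_{X,Y} = u_X ⊗ 1_Y`. Since `u_{X ⊗ Y} = (1 ⊗ c_{A,Y}) ∘ (u_X ⊗ 1_Y)`,
axiom (W1) reduces to the identity
`(u_X ⊗ 1_A) ∘ u_{A ⊗ X} = (1_{A ⊗ X} ⊗ v) ∘ (u_X ⊗ 1_A) ∘ (1_A ⊗ u_X)`,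
which is the 3-cocycle condition carried past `X` by the hexagon identity and naturality of the
braiding. Each of (W2)–(W5) is one augmentation equation, possibly after moving `η` or `ε`
through a braiding with the unit object.
-/

namespace LaxTricocycloid

variable (A : V) (η : 𝟙_ V ⟶ A)

def warpUnit (X : V) : X ⟶ (A ⊗ X) ⊗ 𝟙_ V :=
  (λ_ X).inv ≫ (η ▷ X) ≫ (ρ_ (A ⊗ X)).inv

lemma warpUnit_naturality {X X' : V} (f : X ⟶ X') :
    f ≫ warpUnit A η X' = warpUnit A η X ≫ ((A ◁ f) ▷ 𝟙_ V) := by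
  calc f ≫ warpUnit A η X'
      = 𝟙 _ ⊗≫ ((𝟙_ V) ◁ f ≫ η ▷ X') ⊗≫ 𝟙 _ := by
        simp only [warpUnit]
        monoidal
    _ = _ := by
        rw [whisker_exchange]
        simp only [warpUnit]
        monoidal

lemma warpUnit_counit (ε : A ⟶ 𝟙_ V) (hηε : η ≫ ε = 𝟙 (𝟙_ V)) :
    warpUnit A η (𝟙_ V) ≫ (((ρ_ A).hom ≫ ε) ▷ 𝟙_ V) ≫ (λ_ (𝟙_ V)).hom = 𝟙 (𝟙_ V) := by
  calc warpUnit A η (𝟙_ V) ≫ (((ρ_ A).hom ≫ ε) ▷ 𝟙_ V) ≫ (λ_ (𝟙_ V)).hom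
      = 𝟙 _ ⊗≫ (η ≫ ε) ▷ 𝟙_ V ⊗≫ 𝟙 _ := by
        simp only [warpUnit]
        monoidal
    _ = _ := by
        rw [hηε]
        monoidal

end LaxTricocycloid

variable [BraidedCategory V]

/-- The functor `T = A ⊗ −`. -/
def tensorLeftF (A : V) : V ⥤ V where
  obj X := A ⊗ X
  map f := A ◁ f

def IsLaxTricocycloid (A : V) (v : A ⊗ A ⟶ A ⊗ A) : Prop :=
  (v ▷ A) ≫ (α_ A A A).hom ≫ (A ◁ (β_ A A).hom) ≫ (α_ A A A).inv ≫ (v ▷ A) =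
    (α_ A A A).hom ≫ (A ◁ v) ≫ (α_ A A A).inv ≫ (v ▷ A) ≫
      (α_ A A A).hom ≫ (A ◁ v) ≫ (α_ A A A).inv

namespace LaxTricocycloid

variable (A : V) (v : A ⊗ A ⟶ A ⊗ A)

def twist (X : V) : A ⊗ (A ⊗ X) ⟶ (A ⊗ X) ⊗ A :=
  (α_ A A X).inv ≫ (v ▷ X) ≫ (α_ A A X).hom ≫ (A ◁ (β_ A X).hom) ≫ (α_ A X A).inv

def warp (X Y : V) : A ⊗ ((A ⊗ X) ⊗ Y) ⟶ (A ⊗ X) ⊗ (A ⊗ Y) :=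
  (α_ A (A ⊗ X) Y).inv ≫ (twist A v X ▷ Y) ≫ (α_ (A ⊗ X) A Y).hom

lemma warp_eq (X Y : V) :
    warp A v X Y =
      (A ◁ (α_ A X Y).hom) ≫ (α_ A A (X ⊗ Y)).inv ≫ (v ▷ (X ⊗ Y)) ≫ (α_ A A (X ⊗ Y)).hom ≫
        (A ◁ ((α_ A X Y).inv ≫ ((β_ A X).hom ▷ Y) ≫ (α_ X A Y).hom)) ≫ (α_ A X (A ⊗ Y)).inv := by
  simp only [warp, twist]
  monoidal

lemma twist_naturality {X X' : V} (f : X ⟶ X') :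
    (A ◁ A ◁ f) ≫ twist A v X' = twist A v X ≫ ((A ◁ f) ▷ A) := by
  calc (A ◁ A ◁ f) ≫ twist A v X'
      = 𝟙 _ ⊗≫ ((A ⊗ A) ◁ f ≫ v ▷ X') ⊗≫ A ◁ (β_ A X').hom ⊗≫ 𝟙 _ := by
        simp only [twist]
        monoidal
    _ = 𝟙 _ ⊗≫ v ▷ X ⊗≫ A ◁ (A ◁ f ≫ (β_ A X').hom) ⊗≫ 𝟙 _ := by
        rw [whisker_exchange]
        monoidal
    _ = _ := by
        rw [BraidedCategory.braiding_naturality_right]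
        simp only [twist]
        monoidal

lemma twist_tensor (X Y : V) :
    twist A v (X ⊗ Y) = (A ◁ (α_ A X Y).inv) ⊗≫ (twist A v X ▷ Y) ⊗≫
      ((A ⊗ X) ◁ (β_ A Y).hom) ⊗≫ 𝟙 _ := by
  simp only [twist, BraidedCategory.braiding_tensor_right_hom]
  monoidal

lemma twist_cocycle (hv : IsLaxTricocycloid A v) (X : V) :
    twist A v (A ⊗ X) ≫ (twist A v X ▷ A) =
      (A ◁ twist A v X) ⊗≫ (twist A v X ▷ A) ⊗≫ ((A ⊗ X) ◁ v) ⊗≫ 𝟙 _ := by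
  calc twist A v (A ⊗ X) ≫ (twist A v X ▷ A)
      = 𝟙 _ ⊗≫ ((v ▷ A ≫ (α_ A A A).hom ≫ A ◁ (β_ A A).hom ≫ (α_ A A A).inv) ▷ X) ⊗≫
          ((A ⊗ A) ◁ (β_ A X).hom ≫ v ▷ (X ⊗ A)) ⊗≫ (A ◁ (β_ A X).hom ▷ A) ⊗≫ 𝟙 _ := by
        simp only [twist, BraidedCategory.braiding_tensor_right_hom]
        monoidal
    _ = 𝟙 _ ⊗≫ ((v ▷ A ≫ (α_ A A A).hom ≫ A ◁ (β_ A A).hom ≫ (α_ A A A).inv ≫ v ▷ A) ▷ X) ⊗≫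
          A ◁ (A ◁ (β_ A X).hom ⊗≫ (β_ A X).hom ▷ A) ⊗≫ 𝟙 _ := by
        rw [whisker_exchange]
        monoidal
    _ = 𝟙 _ ⊗≫ (A ◁ v) ▷ X ⊗≫ (v ▷ A) ▷ X ⊗≫ A ◁ (v ▷ X ≫ (β_ (A ⊗ A) X).hom) ⊗≫ 𝟙 _ := by
        rw [hv, BraidedCategory.braiding_tensor_left_hom]
        monoidal
    _ = 𝟙 _ ⊗≫ (A ◁ v) ▷ X ⊗≫ (v ▷ A) ▷ X ⊗≫ A ◁ ((β_ (A ⊗ A) X).hom ≫ X ◁ v) ⊗≫ 𝟙 _ := by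
        rw [BraidedCategory.braiding_naturality_left]
    _ = 𝟙 _ ⊗≫ (A ◁ v) ▷ X ⊗≫ (v ▷ (A ⊗ X) ≫ (A ⊗ A) ◁ (β_ A X).hom) ⊗≫
          (A ◁ (β_ A X).hom ▷ A) ⊗≫ (A ⊗ X) ◁ v ⊗≫ 𝟙 _ := by
        rw [BraidedCategory.braiding_tensor_left_hom]
        monoidal
    _ = _ := by
        rw [← whisker_exchange]
        simp only [twist]
        monoidal

lemma twist_warp (hv : IsLaxTricocycloid A v) (X Y : V) :
    twist A v ((A ⊗ X) ⊗ Y) ≫ (warp A v X Y ▷ A) =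
      (A ◁ warp A v X Y) ⊗≫ (twist A v X ▷ (A ⊗ Y)) ⊗≫ ((A ⊗ X) ◁ twist A v Y) ⊗≫ 𝟙 _ := by
  calc twist A v ((A ⊗ X) ⊗ Y) ≫ (warp A v X Y ▷ A)
      = 𝟙 _ ⊗≫ (twist A v (A ⊗ X) ▷ Y) ⊗≫
          ((A ⊗ (A ⊗ X)) ◁ (β_ A Y).hom ≫ twist A v X ▷ (Y ⊗ A)) ⊗≫ 𝟙 _ := by
        rw [twist_tensor]
        simp only [warp]
        monoidal
    _ = 𝟙 _ ⊗≫ ((twist A v (A ⊗ X) ≫ twist A v X ▷ A) ▷ Y) ⊗≫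
          ((A ⊗ X) ⊗ A) ◁ (β_ A Y).hom ⊗≫ 𝟙 _ := by
        rw [whisker_exchange]
        monoidal
    _ = _ := by
        rw [twist_cocycle A v hv]
        simp only [warp, twist]
        monoidal

lemma warp_assoc (hv : IsLaxTricocycloid A v) (X Y Z : V) :
    warp A v ((A ⊗ X) ⊗ Y) Z ≫ (warp A v X Y ▷ (A ⊗ Z)) ≫ (α_ (A ⊗ X) (A ⊗ Y) (A ⊗ Z)).hom =
      (A ◁ (warp A v X Y ▷ Z)) ≫ (A ◁ (α_ (A ⊗ X) (A ⊗ Y) Z).hom) ≫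
        warp A v X ((A ⊗ Y) ⊗ Z) ≫ ((A ⊗ X) ◁ warp A v Y Z) := by
  calc warp A v ((A ⊗ X) ⊗ Y) Z ≫ (warp A v X Y ▷ (A ⊗ Z)) ≫
        (α_ (A ⊗ X) (A ⊗ Y) (A ⊗ Z)).hom
      = 𝟙 _ ⊗≫ ((twist A v ((A ⊗ X) ⊗ Y) ≫ warp A v X Y ▷ A) ▷ Z) ⊗≫ 𝟙 _ := by
        simp only [warp]
        monoidal
    _ = _ := by
        rw [twist_warp A v hv]
        simp only [warp]
        monoidal

lemma warp_naturality {X X' Y Y' : V} (f : X ⟶ X') (g : Y ⟶ Y') :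
    (A ◁ ((A ◁ f) ⊗ₘ g)) ≫ warp A v X' Y' = warp A v X Y ≫ ((A ◁ f) ⊗ₘ (A ◁ g)) := by
  calc (A ◁ ((A ◁ f) ⊗ₘ g)) ≫ warp A v X' Y'
      = 𝟙 _ ⊗≫ ((A ◁ A ◁ f) ▷ Y) ⊗≫ ((A ⊗ (A ⊗ X')) ◁ g ≫ twist A v X' ▷ Y') ⊗≫ 𝟙 _ := by
        simp only [warp, MonoidalCategory.tensorHom_def]
        monoidal
    _ = 𝟙 _ ⊗≫ ((A ◁ A ◁ f ≫ twist A v X') ▷ Y) ⊗≫ ((A ⊗ X') ⊗ A) ◁ g ⊗≫ 𝟙 _ := by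
        rw [whisker_exchange]
        monoidal
    _ = _ := by
        rw [twist_naturality]
        simp only [warp, MonoidalCategory.tensorHom_def]
        monoidal

lemma warp_counit (ε : A ⟶ 𝟙_ V)
    (hε : v ≫ (ε ▷ A) ≫ (λ_ A).hom = (A ◁ ε) ≫ (ρ_ A).hom) (Y : V) :
    warp A v (𝟙_ V) Y ≫ (((ρ_ A).hom ≫ ε) ▷ (A ⊗ Y)) ≫ (λ_ (A ⊗ Y)).hom =
      (A ◁ (((ρ_ A).hom ≫ ε) ▷ Y)) ≫ (A ◁ (λ_ Y).hom) := by
  calc warp A v (𝟙_ V) Y ≫ (((ρ_ A).hom ≫ ε) ▷ (A ⊗ Y)) ≫ (λ_ (A ⊗ Y)).hom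
      = 𝟙 _ ⊗≫ ((v ≫ (ε ▷ A) ≫ (λ_ A).hom) ▷ Y) ⊗≫ 𝟙 _ := by
        simp only [warp, twist, braiding_tensorUnit_right]
        monoidal
    _ = _ := by
        rw [hε]
        monoidal

variable (η : 𝟙_ V ⟶ A)

lemma whiskerLeft_warpUnit_warp_counit (ε : A ⟶ 𝟙_ V)
    (hηε : (ρ_ A).inv ≫ (A ◁ η) ≫ v ≫ (A ◁ ε) ≫ (ρ_ A).hom = 𝟙 A) (X : V) :
    (A ◁ warpUnit A η X) ≫ warp A v X (𝟙_ V) ≫ ((A ⊗ X) ◁ ((ρ_ A).hom ≫ ε)) =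
      (ρ_ (A ⊗ X)).inv := by
  calc (A ◁ warpUnit A η X) ≫ warp A v X (𝟙_ V) ≫ ((A ⊗ X) ◁ ((ρ_ A).hom ≫ ε))
      = 𝟙 _ ⊗≫ ((A ◁ η ≫ v) ▷ X) ⊗≫ A ◁ ((β_ A X).hom ≫ X ◁ ε) ⊗≫ 𝟙 _ := by
        simp only [warpUnit, warp, twist]
        monoidal
    _ = 𝟙 _ ⊗≫ ((A ◁ η ≫ v) ▷ X) ⊗≫ A ◁ (ε ▷ X ≫ (β_ (𝟙_ V) X).hom) ⊗≫ 𝟙 _ := by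
        rw [BraidedCategory.braiding_naturality_left]
    _ = 𝟙 _ ⊗≫ (((ρ_ A).inv ≫ A ◁ η ≫ v ≫ A ◁ ε ≫ (ρ_ A).hom) ▷ X) ⊗≫ 𝟙 _ := by
        rw [braiding_tensorUnit_left]
        monoidal
    _ = _ := by
        rw [hηε]
        monoidal

lemma warpUnit_warp (hη : (λ_ A).inv ≫ (η ▷ A) ≫ v = (ρ_ A).inv ≫ (A ◁ η)) (X Y : V) :
    warpUnit A η ((A ⊗ X) ⊗ Y) ≫ (warp A v X Y ▷ 𝟙_ V) ≫ (α_ (A ⊗ X) (A ⊗ Y) (𝟙_ V)).hom =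
      (A ⊗ X) ◁ warpUnit A η Y := by
  calc warpUnit A η ((A ⊗ X) ⊗ Y) ≫ (warp A v X Y ▷ 𝟙_ V) ≫
        (α_ (A ⊗ X) (A ⊗ Y) (𝟙_ V)).hom
      = 𝟙 _ ⊗≫ (((λ_ A).inv ≫ (η ▷ A) ≫ v) ▷ X ▷ Y) ⊗≫ (A ◁ (β_ A X).hom) ▷ Y ⊗≫ 𝟙 _ := by
        simp only [warpUnit, warp, twist]
        monoidal
    _ = 𝟙 _ ⊗≫ (A ◁ (η ▷ X ≫ (β_ A X).hom)) ▷ Y ⊗≫ 𝟙 _ := by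
        rw [hη]
        monoidal
    _ = 𝟙 _ ⊗≫ (A ◁ ((β_ (𝟙_ V) X).hom ≫ X ◁ η)) ▷ Y ⊗≫ 𝟙 _ := by
        rw [BraidedCategory.braiding_naturality_left]
    _ = _ := by
        rw [braiding_tensorUnit_left]
        simp only [warpUnit]
        monoidal

end LaxTricocycloid

/-- An augmented lax tricocycloid `(A, v, η, ε)` in a braided monoidal
category `V` determines a skew left warping of `V` with `T = A ⊗ −`, `K = I`,
`v_{X,Y} = (1_A ⊗ c_{A,X} ⊗ 1_Y) ∘ (v ⊗ 1_X ⊗ 1_Y)`, `v₀ = ε` (composed with the unit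
isomorphism) and `k_X = η ⊗ 1_X` (composed with the unit isomorphism). -/
theorem augmented_tricocycloid_skew_left_warping (A : V) (v : A ⊗ A ⟶ A ⊗ A)
    (η : 𝟙_ V ⟶ A) (ε : A ⟶ 𝟙_ V)
    (hv : (v ▷ A) ≫ (α_ A A A).hom ≫ (A ◁ (β_ A A).hom) ≫ (α_ A A A).inv ≫ (v ▷ A) =
      (α_ A A A).hom ≫ (A ◁ v) ≫ (α_ A A A).inv ≫ (v ▷ A) ≫
        (α_ A A A).hom ≫ (A ◁ v) ≫ (α_ A A A).inv)
    (haug1 : (ρ_ A).inv ≫ (A ◁ η) ≫ v ≫ (A ◁ ε) ≫ (ρ_ A).hom = 𝟙 A)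
    (haug2 : v ≫ (ε ▷ A) ≫ (λ_ A).hom = (A ◁ ε) ≫ (ρ_ A).hom)
    (haug3 : (λ_ A).inv ≫ (η ▷ A) ≫ v = (ρ_ A).inv ≫ (A ◁ η))
    (haug4 : η ≫ ε = 𝟙 (𝟙_ V)) :
    IsSkewLeftWarping (tensorLeftF A) (𝟙_ V)
      (fun X Y =>
        (A ◁ (α_ A X Y).hom) ≫ (α_ A A (X ⊗ Y)).inv ≫ (v ▷ (X ⊗ Y)) ≫
          (α_ A A (X ⊗ Y)).hom ≫
          (A ◁ ((α_ A X Y).inv ≫ ((β_ A X).hom ▷ Y) ≫ (α_ X A Y).hom)) ≫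
          (α_ A X (A ⊗ Y)).inv)
      ((ρ_ A).hom ≫ ε)
      (fun X => (λ_ X).inv ≫ (η ▷ X) ≫ (ρ_ (A ⊗ X)).inv) := by
  have key : IsSkewLeftWarping (tensorLeftF A) (𝟙_ V) (LaxTricocycloid.warp A v)
      ((ρ_ A).hom ≫ ε) (LaxTricocycloid.warpUnit A η) :=
    ⟨fun _ _ _ _ => LaxTricocycloid.warp_naturality A v,
      fun _ _ => LaxTricocycloid.warpUnit_naturality A η,
      LaxTricocycloid.warp_assoc A v hv,
      LaxTricocycloid.warp_counit A v ε haug2,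
      LaxTricocycloid.whiskerLeft_warpUnit_warp_counit A v η ε haug1,
      LaxTricocycloid.warpUnit_warp A v η haug3,
      LaxTricocycloid.warpUnit_counit A η ε haug4⟩
  rwa [show LaxTricocycloid.warp A v = _ from funext₂ (LaxTricocycloid.warp_eq A v)] at key
end

section
/- Let A be a monoidal category and let K be an object of A with a right dual R, with unit η : I → R⊗K and counit ε : K⊗R → I. Then the following data form a skew left warping of A in which every v_{A,B} is invertible (a Hopf skew left warping): the functor T = −⊗R; the object K; the natural family v_{A,B} : T(TA⊗B) = A⊗R⊗B⊗R → TA⊗TB = A⊗R⊗B⊗R given by the identity (coherence) isomorphism; the morphism v₀ = ε : K⊗R → I; and the natural family k_A = 1_A⊗η : A → A⊗R⊗K. That is, the five skew left warping axioms (W1)–(W5) hold for this data. -/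
/-!
Since `v` is a coherence isomorphism, naturality of `v` and `k` and the axioms (W1), (W2), (W4)
are instances of coherence and of the interchange law, with `R`, `η`, `ε` arbitrary. Only (W3)
and (W5) see the duality: up to coherence they are `X ◁ -` applied to the second triangle
identity, and the first triangle identity itself.
-/

open CategoryTheory MonoidalCategory

variable {V : Type*} [Category V] [MonoidalCategory V]

/-- The functor `T = − ⊗ R`. -/
def tensorRightF (R : V) : V ⥤ V where
  obj X := X ⊗ R
  map f := f ▷ R

section RightDual

variable {K R : V}

/-- The family `k_X = 1_X ⊗ η` of the warping. -/
def whiskerCoev (η : 𝟙_ V ⟶ R ⊗ K) (X : V) : X ⟶ (X ⊗ R) ⊗ K :=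
  (ρ_ X).inv ≫ X ◁ η ≫ (α_ X R K).inv

lemma whiskerCoev_naturality (η : 𝟙_ V ⟶ R ⊗ K) {X X' : V} (f : X ⟶ X') :
    f ≫ whiskerCoev η X' = whiskerCoev η X ≫ (f ▷ R) ▷ K := by
  simp only [whiskerCoev, Category.assoc, rightUnitor_inv_naturality_assoc,
    ← whisker_exchange_assoc, associator_inv_naturality_left]

lemma whiskerCoev_tensor (η : 𝟙_ V ⟶ R ⊗ K) (A Y : V) :
    whiskerCoev η (A ⊗ Y) ≫ (α_ A Y R).hom ▷ K ≫ (α_ A (Y ⊗ R) K).hom =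
      A ◁ whiskerCoev η Y := by
  simp only [whiskerCoev]
  monoidal

lemma whiskerCoev_whiskerRight_evaluation (η : 𝟙_ V ⟶ R ⊗ K) (ε : K ⊗ R ⟶ 𝟙_ V)
    (htri : (λ_ R).inv ≫ (η ▷ R) ≫ (α_ R K R).hom ≫ (R ◁ ε) ≫ (ρ_ R).hom = 𝟙 R) (X : V) :
    whiskerCoev η X ▷ R ≫ (α_ (X ⊗ R) K R).hom ≫ (X ⊗ R) ◁ ε = (ρ_ (X ⊗ R)).inv :=
  calc _ = X ◁ ((λ_ R).inv ≫ (η ▷ R) ≫ (α_ R K R).hom ≫ (R ◁ ε) ≫ (ρ_ R).hom) ≫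
        (ρ_ (X ⊗ R)).inv := by
          simp only [whiskerCoev, MonoidalCategory.whiskerLeft_comp]
          monoidal
    _ = (ρ_ (X ⊗ R)).inv := by rw [htri, MonoidalCategory.whiskerLeft_id, Category.id_comp]

lemma whiskerCoev_evaluation_whiskerRight (η : 𝟙_ V ⟶ R ⊗ K) (ε : K ⊗ R ⟶ 𝟙_ V)
    (htri : (ρ_ K).inv ≫ (K ◁ η) ≫ (α_ K R K).inv ≫ (ε ▷ K) ≫ (λ_ K).hom = 𝟙 K) :
    whiskerCoev η K ≫ ε ▷ K ≫ (λ_ K).hom = 𝟙 K := by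
  simpa only [whiskerCoev, Category.assoc] using htri

end RightDual

lemma associator_hom_tensorRight_pentagon (A Y Z R : V) :
    (α_ ((A ⊗ Y) ⊗ R) Z R).hom ≫ (α_ A Y R).hom ▷ (Z ⊗ R) ≫ (α_ A (Y ⊗ R) (Z ⊗ R)).hom =
      ((α_ A Y R).hom ▷ Z) ▷ R ≫ (α_ A (Y ⊗ R) Z).hom ▷ R ≫
        (α_ A ((Y ⊗ R) ⊗ Z) R).hom ≫ A ◁ (α_ (Y ⊗ R) Z R).hom := by
  monoidal

lemma associator_hom_whiskerRight_leftUnitor {A : V} (e : A ⟶ 𝟙_ V) (Y R : V) :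
    (α_ A Y R).hom ≫ e ▷ (Y ⊗ R) ≫ (λ_ (Y ⊗ R)).hom = (e ▷ Y) ▷ R ≫ (λ_ Y).hom ▷ R := by
  monoidal

/-- If `K` has a right dual `R` in a monoidal category `V`, with unit
`η : I ⟶ R ⊗ K` and counit `ε : K ⊗ R ⟶ I`, then `T = − ⊗ R`, `K`,
`v_{X,Y} : ((X⊗R)⊗Y)⊗R ⟶ (X⊗R)⊗(Y⊗R)` the coherence isomorphism, `v₀ = ε` and
`k_X = 1_X ⊗ η` form a skew left warping of `V` in which every `v_{X,Y}` is invertible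
(a Hopf skew left warping). -/
theorem right_dual_hopf_skew_left_warping (K R : V)
    (η : 𝟙_ V ⟶ R ⊗ K) (ε : K ⊗ R ⟶ 𝟙_ V)
    (htri1 : (ρ_ K).inv ≫ (K ◁ η) ≫ (α_ K R K).inv ≫ (ε ▷ K) ≫ (λ_ K).hom = 𝟙 K)
    (htri2 : (λ_ R).inv ≫ (η ▷ R) ≫ (α_ R K R).hom ≫ (R ◁ ε) ≫ (ρ_ R).hom = 𝟙 R) :
    IsSkewLeftWarping (tensorRightF R) K
      (fun X Y => (α_ (X ⊗ R) Y R).hom)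
      ε
      (fun X => (ρ_ X).inv ≫ (X ◁ η) ≫ (α_ X R K).inv) ∧
    (∀ X Y : V, IsIso ((α_ (X ⊗ R) Y R).hom)) := by
  refine ⟨⟨fun X X' Y Y' f g => ?_, fun X X' f => whiskerCoev_naturality η f,
    fun X Y Z => associator_hom_tensorRight_pentagon (X ⊗ R) Y Z R,
    fun Y => associator_hom_whiskerRight_leftUnitor ε Y R,
    whiskerCoev_whiskerRight_evaluation η ε htri2,
    fun X Y => whiskerCoev_tensor η (X ⊗ R) Y,
    whiskerCoev_evaluation_whiskerRight η ε htri1⟩, fun _ _ => inferInstance⟩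
  simpa [tensorRightF] using associator_naturality (f ▷ R) g (𝟙 R)
end

section
/- Let A be a monoidal category and let (T, μ, η, ψ, ψ₀) be an opmonoidal monad on A. Then the following data form a skew left warping of A: the functor T; the object K = I; the natural family v_{A,B} = (μ_A⊗1_{TB})∘ψ_{TA,B} : T(TA⊗B) → TA⊗TB; the morphism v₀ = ψ₀ : TI → I; and the natural family k_A = ρ_{TA}∘η_A : A → TA⊗I. That is, the five skew left warping axioms (W1)–(W5) hold for this data. -/
open CategoryTheory MonoidalCategory

variable {V : Type*} [Category V] [MonoidalCategory V]

/-- An opmonoidal monad on the monoidal category `V`: a monad `(T, μ, η)` together with an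
opmonoidal structure `(ψ, ψ₀)` on `T` for which `μ` and `η` are opmonoidal natural
transformations. -/
def IsOpmonoidalMonad (T : V ⥤ V)
    (μ : ∀ X : V, T.obj (T.obj X) ⟶ T.obj X) (η : ∀ X : V, X ⟶ T.obj X)
    (ψ : ∀ X Y : V, T.obj (X ⊗ Y) ⟶ T.obj X ⊗ T.obj Y)
    (ψ₀ : T.obj (𝟙_ V) ⟶ 𝟙_ V) : Prop :=
  -- naturality of μ and η
  (∀ (X Y : V) (f : X ⟶ Y), T.map (T.map f) ≫ μ Y = μ X ≫ T.map f) ∧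
  (∀ (X Y : V) (f : X ⟶ Y), f ≫ η Y = η X ≫ T.map f) ∧
  -- monad axioms
  (∀ X : V, μ (T.obj X) ≫ μ X = T.map (μ X) ≫ μ X) ∧
  (∀ X : V, η (T.obj X) ≫ μ X = 𝟙 (T.obj X)) ∧
  (∀ X : V, T.map (η X) ≫ μ X = 𝟙 (T.obj X)) ∧
  -- naturality of ψ
  (∀ (X X' Y Y' : V) (f : X ⟶ X') (g : Y ⟶ Y'),
    T.map (f ⊗ₘ g) ≫ ψ X' Y' = ψ X Y ≫ (T.map f ⊗ₘ T.map g)) ∧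
  -- opmonoidal functor axioms: coassociativity and counitality of ψ
  (∀ X Y Z : V,
    T.map (α_ X Y Z).hom ≫ ψ X (Y ⊗ Z) ≫ (T.obj X ◁ ψ Y Z) =
      ψ (X ⊗ Y) Z ≫ (ψ X Y ▷ T.obj Z) ≫ (α_ (T.obj X) (T.obj Y) (T.obj Z)).hom) ∧
  (∀ X : V, ψ (𝟙_ V) X ≫ (ψ₀ ▷ T.obj X) ≫ (λ_ (T.obj X)).hom = T.map (λ_ X).hom) ∧
  (∀ X : V, ψ X (𝟙_ V) ≫ (T.obj X ◁ ψ₀) ≫ (ρ_ (T.obj X)).hom = T.map (ρ_ X).hom) ∧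
  -- μ is opmonoidal
  (∀ X Y : V,
    T.map (ψ X Y) ≫ ψ (T.obj X) (T.obj Y) ≫ (μ X ⊗ₘ μ Y) = μ (X ⊗ Y) ≫ ψ X Y) ∧
  (T.map ψ₀ ≫ ψ₀ = μ (𝟙_ V) ≫ ψ₀) ∧
  -- η is opmonoidal
  (∀ X Y : V, η (X ⊗ Y) ≫ ψ X Y = η X ⊗ₘ η Y) ∧
  (η (𝟙_ V) ≫ ψ₀ = 𝟙 (𝟙_ V))

/-! The warping map `v` is the right fusion operator `H` of the opmonoidal monad. Its key property
is `μ ≫ H = T H ≫ ψ ≫ (μ ⊗ μ)`, which combines opmonoidality of `μ` with associativity of the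
monad; with it, (W1) becomes coassociativity of `ψ`. The unit axioms (W2)–(W5) are counitality of
`ψ` combined with opmonoidality of `μ` and `η` and the unit laws of the monad. -/

-- The right fusion operator of Bruguières–Lack–Virelizier.
def rightFusion (T : V ⥤ V) (μ : ∀ X : V, T.obj (T.obj X) ⟶ T.obj X)
    (ψ : ∀ X Y : V, T.obj (X ⊗ Y) ⟶ T.obj X ⊗ T.obj Y) (X Y : V) :
    T.obj (T.obj X ⊗ Y) ⟶ T.obj X ⊗ T.obj Y :=
  ψ (T.obj X) Y ≫ (μ X ▷ T.obj Y)

namespace IsOpmonoidalMonad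

variable {T : V ⥤ V} {μ : ∀ X : V, T.obj (T.obj X) ⟶ T.obj X} {η : ∀ X : V, X ⟶ T.obj X}
  {ψ : ∀ X Y : V, T.obj (X ⊗ Y) ⟶ T.obj X ⊗ T.obj Y} {ψ₀ : T.obj (𝟙_ V) ⟶ 𝟙_ V}

theorem μ_naturality (h : IsOpmonoidalMonad T μ η ψ ψ₀) {X Y : V} (f : X ⟶ Y) :
    T.map (T.map f) ≫ μ Y = μ X ≫ T.map f :=
  h.1 X Y f

theorem η_naturality (h : IsOpmonoidalMonad T μ η ψ ψ₀) {X Y : V} (f : X ⟶ Y) :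
    f ≫ η Y = η X ≫ T.map f :=
  h.2.1 X Y f

theorem assoc (h : IsOpmonoidalMonad T μ η ψ ψ₀) (X : V) :
    μ (T.obj X) ≫ μ X = T.map (μ X) ≫ μ X :=
  h.2.2.1 X

theorem left_unit (h : IsOpmonoidalMonad T μ η ψ ψ₀) (X : V) :
    η (T.obj X) ≫ μ X = 𝟙 (T.obj X) :=
  h.2.2.2.1 X

theorem right_unit (h : IsOpmonoidalMonad T μ η ψ ψ₀) (X : V) :
    T.map (η X) ≫ μ X = 𝟙 (T.obj X) :=
  h.2.2.2.2.1 X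

theorem ψ_naturality (h : IsOpmonoidalMonad T μ η ψ ψ₀) {X X' Y Y' : V} (f : X ⟶ X')
    (g : Y ⟶ Y') : T.map (f ⊗ₘ g) ≫ ψ X' Y' = ψ X Y ≫ (T.map f ⊗ₘ T.map g) :=
  h.2.2.2.2.2.1 X X' Y Y' f g

theorem associativity (h : IsOpmonoidalMonad T μ η ψ ψ₀) (X Y Z : V) :
    T.map (α_ X Y Z).hom ≫ ψ X (Y ⊗ Z) ≫ (T.obj X ◁ ψ Y Z) =
      ψ (X ⊗ Y) Z ≫ (ψ X Y ▷ T.obj Z) ≫ (α_ (T.obj X) (T.obj Y) (T.obj Z)).hom :=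
  h.2.2.2.2.2.2.1 X Y Z

theorem left_unitality (h : IsOpmonoidalMonad T μ η ψ ψ₀) (X : V) :
    ψ (𝟙_ V) X ≫ (ψ₀ ▷ T.obj X) ≫ (λ_ (T.obj X)).hom = T.map (λ_ X).hom :=
  h.2.2.2.2.2.2.2.1 X

theorem right_unitality (h : IsOpmonoidalMonad T μ η ψ ψ₀) (X : V) :
    ψ X (𝟙_ V) ≫ (T.obj X ◁ ψ₀) ≫ (ρ_ (T.obj X)).hom = T.map (ρ_ X).hom :=
  h.2.2.2.2.2.2.2.2.1 X

theorem μ_ψ (h : IsOpmonoidalMonad T μ η ψ ψ₀) (X Y : V) :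
    T.map (ψ X Y) ≫ ψ (T.obj X) (T.obj Y) ≫ (μ X ⊗ₘ μ Y) = μ (X ⊗ Y) ≫ ψ X Y :=
  h.2.2.2.2.2.2.2.2.2.1 X Y

theorem μ_ψ₀ (h : IsOpmonoidalMonad T μ η ψ ψ₀) : T.map ψ₀ ≫ ψ₀ = μ (𝟙_ V) ≫ ψ₀ :=
  h.2.2.2.2.2.2.2.2.2.2.1

theorem η_ψ (h : IsOpmonoidalMonad T μ η ψ ψ₀) (X Y : V) : η (X ⊗ Y) ≫ ψ X Y = η X ⊗ₘ η Y :=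
  h.2.2.2.2.2.2.2.2.2.2.2.1 X Y

theorem η_ψ₀ (h : IsOpmonoidalMonad T μ η ψ ψ₀) : η (𝟙_ V) ≫ ψ₀ = 𝟙 (𝟙_ V) :=
  h.2.2.2.2.2.2.2.2.2.2.2.2

theorem ψ_natural_left (h : IsOpmonoidalMonad T μ η ψ ψ₀) {X X' : V} (f : X ⟶ X') (Y : V) :
    T.map (f ▷ Y) ≫ ψ X' Y = ψ X Y ≫ (T.map f ▷ T.obj Y) := by
  simpa using h.ψ_naturality f (𝟙 Y)

theorem rightFusion_naturality (h : IsOpmonoidalMonad T μ η ψ ψ₀) {X X' Y Y' : V}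
    (f : X ⟶ X') (g : Y ⟶ Y') :
    T.map (T.map f ⊗ₘ g) ≫ rightFusion T μ ψ X' Y' =
      rightFusion T μ ψ X Y ≫ (T.map f ⊗ₘ T.map g) := by
  rw [rightFusion, reassoc_of% (h.ψ_naturality (T.map f) g), rightFusion]
  simp only [MonoidalCategory.tensorHom_def, Category.assoc, whisker_exchange,
    ← comp_whiskerRight_assoc, h.μ_naturality]

theorem μ_rightFusion (h : IsOpmonoidalMonad T μ η ψ ψ₀) (X Y : V) :
    μ (T.obj X ⊗ Y) ≫ rightFusion T μ ψ X Y =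
      T.map (rightFusion T μ ψ X Y) ≫ ψ (T.obj X) (T.obj Y) ≫ (μ X ⊗ₘ μ Y) := by
  have hμμ : (μ (T.obj X) ⊗ₘ μ Y) ≫ (μ X ▷ T.obj Y) = (T.map (μ X) ▷ _) ≫ (μ X ⊗ₘ μ Y) := by
    simp only [← tensorHom_id, tensorHom_comp_tensorHom, Category.comp_id, Category.id_comp,
      h.assoc]
  rw [rightFusion, ← reassoc_of% (h.μ_ψ (T.obj X) Y), hμμ, T.map_comp, Category.assoc,
    reassoc_of% (h.ψ_natural_left (μ X) (T.obj Y))]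

theorem rightFusion_assoc (h : IsOpmonoidalMonad T μ η ψ ψ₀) (X Y Z : V) :
    rightFusion T μ ψ (T.obj X ⊗ Y) Z ≫ (rightFusion T μ ψ X Y ▷ T.obj Z) ≫
        (α_ (T.obj X) (T.obj Y) (T.obj Z)).hom =
      T.map (rightFusion T μ ψ X Y ▷ Z) ≫ T.map (α_ (T.obj X) (T.obj Y) Z).hom ≫
        rightFusion T μ ψ X (T.obj Y ⊗ Z) ≫ (T.obj X ◁ rightFusion T μ ψ Y Z) := by
  have hα : ((μ X ⊗ₘ μ Y) ▷ T.obj Z) ≫ (α_ (T.obj X) (T.obj Y) (T.obj Z)).hom =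
      (α_ _ _ _).hom ≫ (μ X ⊗ₘ (μ Y ▷ T.obj Z)) := by
    simpa only [tensorHom_id] using associator_naturality (μ X) (μ Y) (𝟙 (T.obj Z))
  calc _ = ψ _ Z ≫ ((μ (T.obj X ⊗ Y) ≫ rightFusion T μ ψ X Y) ▷ T.obj Z) ≫
        (α_ (T.obj X) (T.obj Y) (T.obj Z)).hom := by
        rw [rightFusion, Category.assoc, ← comp_whiskerRight_assoc]
    _ = T.map (rightFusion T μ ψ X Y ▷ Z) ≫
        (ψ (T.obj X ⊗ T.obj Y) Z ≫ (ψ (T.obj X) (T.obj Y) ▷ T.obj Z) ≫ (α_ _ _ _).hom) ≫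
          (μ X ⊗ₘ (μ Y ▷ T.obj Z)) := by
        simp only [h.μ_rightFusion, comp_whiskerRight, Category.assoc,
          ← reassoc_of% (h.ψ_natural_left (rightFusion T μ ψ X Y) Z)]
        rw [hα]
    _ = T.map (rightFusion T μ ψ X Y ▷ Z) ≫ T.map (α_ (T.obj X) (T.obj Y) Z).hom ≫
        ψ (T.obj X) (T.obj Y ⊗ Z) ≫ (T.obj (T.obj X) ◁ ψ (T.obj Y) Z) ≫
          (μ X ⊗ₘ (μ Y ▷ T.obj Z)) := by
        rw [← h.associativity]
        simp only [Category.assoc]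
    _ = _ := by
        simp only [rightFusion, MonoidalCategory.tensorHom_def, whiskerLeft_comp,
          whisker_exchange_assoc, Category.assoc]

theorem rightFusion_left_unitality (h : IsOpmonoidalMonad T μ η ψ ψ₀) (Y : V) :
    rightFusion T μ ψ (𝟙_ V) Y ≫ (ψ₀ ▷ T.obj Y) ≫ (λ_ (T.obj Y)).hom =
      T.map (ψ₀ ▷ Y) ≫ T.map (λ_ Y).hom := by
  rw [rightFusion, Category.assoc, ← comp_whiskerRight_assoc, ← h.μ_ψ₀, comp_whiskerRight_assoc,
    ← reassoc_of% (h.ψ_natural_left ψ₀ Y), h.left_unitality]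

theorem rightFusion_whiskerLeft_ψ₀ (h : IsOpmonoidalMonad T μ η ψ ψ₀) (X : V) :
    rightFusion T μ ψ X (𝟙_ V) ≫ (T.obj X ◁ ψ₀) =
      T.map (ρ_ (T.obj X)).hom ≫ μ X ≫ (ρ_ (T.obj X)).inv := by
  have hψ : ψ (T.obj X) (𝟙_ V) ≫ (T.obj (T.obj X) ◁ ψ₀) =
      T.map (ρ_ (T.obj X)).hom ≫ (ρ_ (T.obj (T.obj X))).inv := by
    rw [← h.right_unitality, Category.assoc, Category.assoc, Iso.hom_inv_id, Category.comp_id]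
  rw [rightFusion, Category.assoc, ← whisker_exchange, reassoc_of% hψ,
    rightUnitor_inv_naturality]

theorem η_rightFusion (h : IsOpmonoidalMonad T μ η ψ ψ₀) (X Y : V) :
    η (T.obj X ⊗ Y) ≫ rightFusion T μ ψ X Y = T.obj X ◁ η Y := by
  rw [rightFusion, reassoc_of% (h.η_ψ (T.obj X) Y), MonoidalCategory.tensorHom_def,
    Category.assoc, whisker_exchange, ← comp_whiskerRight_assoc, h.left_unit, id_whiskerRight,
    Category.id_comp]

theorem rightFusion_right_unitality (h : IsOpmonoidalMonad T μ η ψ ψ₀) (X : V) :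
    T.map (η X ≫ (ρ_ (T.obj X)).inv) ≫ rightFusion T μ ψ X (𝟙_ V) ≫ (T.obj X ◁ ψ₀) =
      (ρ_ (T.obj X)).inv := by
  rw [h.rightFusion_whiskerLeft_ψ₀, ← T.map_comp_assoc, Category.assoc, Iso.inv_hom_id,
    Category.comp_id, reassoc_of% (h.right_unit X)]

theorem η_rightFusion_associator (h : IsOpmonoidalMonad T μ η ψ ψ₀) (X Y : V) :
    (η (T.obj X ⊗ Y) ≫ (ρ_ (T.obj (T.obj X ⊗ Y))).inv) ≫ (rightFusion T μ ψ X Y ▷ 𝟙_ V) ≫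
        (α_ (T.obj X) (T.obj Y) (𝟙_ V)).hom =
      T.obj X ◁ (η Y ≫ (ρ_ (T.obj Y)).inv) := by
  rw [Category.assoc, ← rightUnitor_inv_naturality_assoc, reassoc_of% (h.η_rightFusion X Y),
    rightUnitor_tensor_inv, Category.assoc, Iso.inv_hom_id, Category.comp_id, whiskerLeft_comp]

end IsOpmonoidalMonad

/-- An opmonoidal monad `(T, μ, η, ψ, ψ₀)` on a monoidal category `V`
determines a skew left warping of `V` with the same functor `T`, `K = I`,
`v_{X,Y} = (μ_X ⊗ 1_{TY}) ∘ ψ_{TX,Y}`, `v₀ = ψ₀` and `k_X = ρ_{TX} ∘ η_X`. -/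
theorem opmonoidal_monad_gives_skew_left_warping (T : V ⥤ V)
    (μ : ∀ X : V, T.obj (T.obj X) ⟶ T.obj X) (η : ∀ X : V, X ⟶ T.obj X)
    (ψ : ∀ X Y : V, T.obj (X ⊗ Y) ⟶ T.obj X ⊗ T.obj Y) (ψ₀ : T.obj (𝟙_ V) ⟶ 𝟙_ V)
    (h : IsOpmonoidalMonad T μ η ψ ψ₀) :
    IsSkewLeftWarping T (𝟙_ V)
      (fun X Y => ψ (T.obj X) Y ≫ (μ X ▷ T.obj Y))
      ψ₀
      (fun X => η X ≫ (ρ_ (T.obj X)).inv) := by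
  refine ⟨fun _ _ _ _ => h.rightFusion_naturality, fun _ _ f => ?_, h.rightFusion_assoc,
    h.rightFusion_left_unitality, h.rightFusion_right_unitality, h.η_rightFusion_associator, ?_⟩
  · rw [reassoc_of% (h.η_naturality f), Category.assoc, rightUnitor_inv_naturality]
  · rw [Category.assoc, ← rightUnitor_inv_naturality_assoc, reassoc_of% h.η_ψ₀,
      ← unitors_inv_equal, Iso.inv_hom_id]
end

section
/- Let A be a monoidal category and let (T, I, v, v₀, k) be a skew left warping of A whose object K equals the unit object I. Define μ_A = ρ_{TA}⁻¹∘(1_{TA}⊗v₀)∘v_{A,I}∘T(ρ_{TA}) : TTA → TA, η_A = ρ_{TA}⁻¹∘k_A : A → TA, ψ_{A,B} = v_{A,B}∘T(η_A⊗1_B) : T(A⊗B) → TA⊗TB, and ψ₀ = v₀ : TI → I. Then (T, μ, η) is a monad on A and (ψ, ψ₀) makes it an opmonoidal monad. -/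
open CategoryTheory MonoidalCategory

variable {V : Type*} [Category V] [MonoidalCategory V]

/-!
With `K = I`, the multiplication is `μ_X = m_X ∘ T(ρ⁻¹)` for the contraction
`m_X = ρ ∘ (1 ⊗ v₀) ∘ v_{X,I} : T(TX ⊗ I) → TX`, and (W1) (together with (W2) for the first)
says exactly that `m` commutes with `v` in both variables:
`v_{X,Z} ∘ T(m_X ⊗ 1) = (m_X ⊗ 1) ∘ v_{TX⊗I,Z}` and
`v_{X,Y} ∘ m_{TX⊗Y} = (1 ⊗ m_Y) ∘ v_{X,TY⊗I} ∘ T(α ∘ (v_{X,Y} ⊗ 1))`.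
The first gives associativity of `μ`, the second that `μ` is opmonoidal. The unit laws come from
(W3)–(W5): (W3) is `μ ∘ Tη = 1`, (W5) is `v₀ ∘ η_I = 1`, and (W4) reads
`v_{X,Y} ∘ η_{TX⊗Y} = 1 ⊗ η_Y`, which yields both `μ ∘ ηT = 1` and `ψ ∘ η = η ⊗ η`.
Coassociativity of `ψ` is (W1) precomposed with `η ⊗ η`.
-/

namespace SkewLeftWarping

variable {T : V ⥤ V}

def contract {K : V} (v : ∀ X Y : V, T.obj (T.obj X ⊗ Y) ⟶ T.obj X ⊗ T.obj Y)
    (v₀ : T.obj K ⟶ 𝟙_ V) (X : V) : T.obj (T.obj X ⊗ K) ⟶ T.obj X :=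
  v X K ≫ (T.obj X ◁ v₀) ≫ (ρ_ (T.obj X)).hom

lemma contract_comp {K : V} (v : ∀ X Y : V, T.obj (T.obj X ⊗ Y) ⟶ T.obj X ⊗ T.obj Y)
    (v₀ : T.obj K ⟶ 𝟙_ V) {X B : V} (g : T.obj X ⟶ B) :
    contract v v₀ X ≫ g = v X K ≫ (g ▷ T.obj K) ≫ (B ◁ v₀) ≫ (ρ_ B).hom := by
  rw [contract, Category.assoc, Category.assoc, ← rightUnitor_naturality, whisker_exchange_assoc]

def mul (v : ∀ X Y : V, T.obj (T.obj X ⊗ Y) ⟶ T.obj X ⊗ T.obj Y) (v₀ : T.obj (𝟙_ V) ⟶ 𝟙_ V)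
    (X : V) : T.obj (T.obj X) ⟶ T.obj X :=
  T.map (ρ_ (T.obj X)).inv ≫ contract v v₀ X

def unit (k : ∀ X : V, X ⟶ T.obj X ⊗ 𝟙_ V) (X : V) : X ⟶ T.obj X :=
  k X ≫ (ρ_ (T.obj X)).hom

def comul (v : ∀ X Y : V, T.obj (T.obj X ⊗ Y) ⟶ T.obj X ⊗ T.obj Y)
    (k : ∀ X : V, X ⟶ T.obj X ⊗ 𝟙_ V) (X Y : V) : T.obj (X ⊗ Y) ⟶ T.obj X ⊗ T.obj Y :=
  T.map (unit k X ▷ Y) ≫ v X Y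

end SkewLeftWarping

namespace IsSkewLeftWarping

open SkewLeftWarping

variable {T : V ⥤ V} {v : ∀ X Y : V, T.obj (T.obj X ⊗ Y) ⟶ T.obj X ⊗ T.obj Y}

section

variable {K : V} {v₀ : T.obj K ⟶ 𝟙_ V} {k : ∀ X : V, X ⟶ T.obj X ⊗ K}

lemma map_whiskerRight_comp_v (h : IsSkewLeftWarping T K v v₀ k) {X X' : V} (f : X ⟶ X')
    (Y : V) : T.map (T.map f ▷ Y) ≫ v X' Y = v X Y ≫ (T.map f ▷ T.obj Y) := by
  simpa using h.1 X X' Y Y f (𝟙 Y)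

lemma map_whiskerLeft_comp_v (h : IsSkewLeftWarping T K v v₀ k) (X : V) {Y Y' : V}
    (g : Y ⟶ Y') : T.map (T.obj X ◁ g) ≫ v X Y' = v X Y ≫ (T.obj X ◁ T.map g) := by
  simpa using h.1 X X Y Y' (𝟙 X) g

lemma map_whiskerRight_comp_contract (h : IsSkewLeftWarping T K v v₀ k) {X Y : V}
    (f : X ⟶ Y) : T.map (T.map f ▷ K) ≫ contract v v₀ Y = contract v v₀ X ≫ T.map f := by
  rw [contract_comp, contract, reassoc_of% (h.map_whiskerRight_comp_v f K)]

lemma map_contract_whiskerRight_comp_v (h : IsSkewLeftWarping T K v v₀ k) (X Z : V) :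
    T.map (contract v v₀ X ▷ Z) ≫ v X Z = v (T.obj X ⊗ K) Z ≫ (contract v v₀ X ▷ T.obj Z) := by
  have W1 := h.2.2.1
  have W2 := h.2.2.2.1
  calc T.map (contract v v₀ X ▷ Z) ≫ v X Z
      = T.map ((v X K ▷ Z) ≫ (α_ _ _ _).hom ≫ (T.obj X ◁ ((v₀ ▷ Z) ≫ (λ_ Z).hom))) ≫
          v X Z := by
        congr 2; simp only [contract]; monoidal
    _ = T.map (v X K ▷ Z) ≫ T.map (α_ _ _ _).hom ≫ v X (T.obj K ⊗ Z) ≫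
          (T.obj X ◁ (v K Z ≫ (v₀ ▷ T.obj Z) ≫ (λ_ (T.obj Z)).hom)) := by
        rw [W2, ← Functor.map_comp, ← h.map_whiskerLeft_comp_v]
        simp only [Functor.map_comp, Category.assoc]
    _ = v (T.obj X ⊗ K) Z ≫ (v X K ▷ T.obj Z) ≫ (α_ _ _ _).hom ≫
          (T.obj X ◁ ((v₀ ▷ T.obj Z) ≫ (λ_ (T.obj Z)).hom)) := by
        rw [reassoc_of% (W1 X K Z), MonoidalCategory.whiskerLeft_comp]
    _ = v (T.obj X ⊗ K) Z ≫ (contract v v₀ X ▷ T.obj Z) := by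
        congr 1; simp only [contract]; monoidal

lemma contract_comp_v (h : IsSkewLeftWarping T K v v₀ k) (X Y : V) :
    contract v v₀ (T.obj X ⊗ Y) ≫ v X Y =
      T.map ((v X Y ▷ K) ≫ (α_ (T.obj X) (T.obj Y) K).hom) ≫ v X (T.obj Y ⊗ K) ≫
        (T.obj X ◁ contract v v₀ Y) := by
  have hρ : ((T.obj X ⊗ T.obj Y) ◁ v₀) ≫ (ρ_ _).hom =
      (α_ _ _ _).hom ≫ (T.obj X ◁ (T.obj Y ◁ v₀ ≫ (ρ_ _).hom)) := by
    monoidal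
  obtain ⟨-, -, W1, -⟩ := h
  rw [contract_comp, hρ, reassoc_of% (W1 X Y K)]
  simp only [contract, Functor.map_comp, MonoidalCategory.whiskerLeft_comp, Category.assoc]

end

variable {v₀ : T.obj (𝟙_ V) ⟶ 𝟙_ V} {k : ∀ X : V, X ⟶ T.obj X ⊗ 𝟙_ V}

lemma unit_naturality (h : IsSkewLeftWarping T (𝟙_ V) v v₀ k) {X Y : V} (f : X ⟶ Y) :
    f ≫ unit k Y = unit k X ≫ T.map f := by
  obtain ⟨-, hk, -⟩ := h
  rw [unit, unit, reassoc_of% (hk X Y f), Category.assoc, rightUnitor_naturality]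

lemma unit_comp_v₀ (h : IsSkewLeftWarping T (𝟙_ V) v v₀ k) : unit k (𝟙_ V) ≫ v₀ = 𝟙 _ := by
  rw [unit, Category.assoc, ← rightUnitor_naturality, ← unitors_equal]
  obtain ⟨-, -, -, -, -, -, W5⟩ := h
  exact W5

lemma unit_comp_v (h : IsSkewLeftWarping T (𝟙_ V) v v₀ k) (X Y : V) :
    unit k (T.obj X ⊗ Y) ≫ v X Y = T.obj X ◁ unit k Y := by
  obtain ⟨-, -, -, -, -, W4, -⟩ := h
  calc unit k (T.obj X ⊗ Y) ≫ v X Y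
      = (k (T.obj X ⊗ Y) ≫ (v X Y ▷ _) ≫ (α_ _ _ _).hom) ≫ (α_ _ _ _).inv ≫ (ρ_ _).hom := by
        simp [unit]
    _ = T.obj X ◁ unit k Y := by
        rw [W4 X Y, unit]; monoidal

lemma mul_naturality (h : IsSkewLeftWarping T (𝟙_ V) v v₀ k) {X Y : V} (f : X ⟶ Y) :
    T.map (T.map f) ≫ mul v v₀ Y = mul v v₀ X ≫ T.map f := by
  rw [mul, mul, ← Functor.map_comp_assoc, rightUnitor_inv_naturality, Functor.map_comp_assoc,
    h.map_whiskerRight_comp_contract, Category.assoc]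

lemma map_unit_comp_mul (h : IsSkewLeftWarping T (𝟙_ V) v v₀ k) (X : V) :
    T.map (unit k X) ≫ mul v v₀ X = 𝟙 _ := by
  obtain ⟨-, -, -, -, W3, -⟩ := h
  rw [unit, mul, contract, ← Functor.map_comp_assoc, Category.assoc, Iso.hom_inv_id,
    Category.comp_id, reassoc_of% (W3 X), Iso.inv_hom_id]

lemma unit_comp_mul (h : IsSkewLeftWarping T (𝟙_ V) v v₀ k) (X : V) :
    unit k (T.obj X) ≫ mul v v₀ X = 𝟙 _ := by
  rw [mul, ← reassoc_of% (h.unit_naturality (ρ_ (T.obj X)).inv), contract,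
    reassoc_of% (h.unit_comp_v X (𝟙_ V)), ← MonoidalCategory.whiskerLeft_comp_assoc,
    h.unit_comp_v₀, MonoidalCategory.whiskerLeft_id, Category.id_comp, Iso.inv_hom_id]

lemma map_mul_whiskerRight_comp_v (h : IsSkewLeftWarping T (𝟙_ V) v v₀ k) (X Z : V) :
    T.map (mul v v₀ X ▷ Z) ≫ v X Z = v (T.obj X) Z ≫ (mul v v₀ X ▷ T.obj Z) := by
  rw [mul, comp_whiskerRight, Functor.map_comp_assoc, h.map_contract_whiskerRight_comp_v,
    reassoc_of% (h.map_whiskerRight_comp_v (ρ_ (T.obj X)).inv Z), comp_whiskerRight]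

lemma mul_comp_v (h : IsSkewLeftWarping T (𝟙_ V) v v₀ k) (X Y : V) :
    mul v v₀ (T.obj X ⊗ Y) ≫ v X Y = T.map (v X Y) ≫ v X (T.obj Y) ≫ (T.obj X ◁ mul v v₀ Y) := by
  calc mul v v₀ (T.obj X ⊗ Y) ≫ v X Y
      = T.map (v X Y ≫ (T.obj X ◁ (ρ_ (T.obj Y)).inv)) ≫ v X (T.obj Y ⊗ 𝟙_ V) ≫
          (T.obj X ◁ contract v v₀ Y) := by
        rw [mul, Category.assoc, h.contract_comp_v, ← Functor.map_comp_assoc]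
        congr 2
        rw [← rightUnitor_inv_naturality_assoc]
        monoidal
    _ = T.map (v X Y) ≫ v X (T.obj Y) ≫ (T.obj X ◁ mul v v₀ Y) := by
        rw [Functor.map_comp_assoc, reassoc_of% (h.map_whiskerLeft_comp_v X _), mul,
          MonoidalCategory.whiskerLeft_comp]

lemma mul_assoc (h : IsSkewLeftWarping T (𝟙_ V) v v₀ k) (X : V) :
    mul v v₀ (T.obj X) ≫ mul v v₀ X = T.map (mul v v₀ X) ≫ mul v v₀ X := by
  calc mul v v₀ (T.obj X) ≫ mul v v₀ X
      = T.map (ρ_ _).inv ≫ T.map (mul v v₀ X ▷ 𝟙_ V) ≫ contract v v₀ X := by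
        rw [mul, Category.assoc, contract_comp,
          ← reassoc_of% (h.map_mul_whiskerRight_comp_v X (𝟙_ V)), contract]
    _ = T.map (mul v v₀ X) ≫ mul v v₀ X := by
        rw [← Functor.map_comp_assoc, ← rightUnitor_inv_naturality, Functor.map_comp_assoc, mul]

lemma map_v₀_comp_v₀ (h : IsSkewLeftWarping T (𝟙_ V) v v₀ k) :
    T.map v₀ ≫ v₀ = mul v v₀ (𝟙_ V) ≫ v₀ := by
  have hunitor : (v₀ ▷ T.obj (𝟙_ V)) ≫ (𝟙_ V ◁ v₀) ≫ (ρ_ (𝟙_ V)).hom =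
      (v₀ ▷ T.obj (𝟙_ V)) ≫ (λ_ (T.obj (𝟙_ V))).hom ≫ v₀ := by
    rw [← unitors_equal, leftUnitor_naturality]
  obtain ⟨-, -, -, W2, -⟩ := h
  rw [mul, Category.assoc, contract_comp, hunitor, reassoc_of% (W2 (𝟙_ V)),
    ← Functor.map_comp_assoc, ← Functor.map_comp_assoc, Category.assoc, unitors_equal,
    rightUnitor_naturality, Iso.inv_hom_id_assoc]

lemma comul_naturality (h : IsSkewLeftWarping T (𝟙_ V) v v₀ k) {X X' Y Y' : V}
    (f : X ⟶ X') (g : Y ⟶ Y') :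
    T.map (f ⊗ₘ g) ≫ comul v k X' Y' = comul v k X Y ≫ (T.map f ⊗ₘ T.map g) := by
  have hη : (f ⊗ₘ g) ≫ (unit k X' ▷ Y') = (unit k X ▷ Y) ≫ (T.map f ⊗ₘ g) := by
    rw [MonoidalCategory.tensorHom_def, Category.assoc, whisker_exchange, ← comp_whiskerRight_assoc,
      h.unit_naturality, MonoidalCategory.tensorHom_def, comp_whiskerRight_assoc]
  obtain ⟨hv, -⟩ := h
  rw [comul, comul, ← Functor.map_comp_assoc, hη, Functor.map_comp_assoc, hv, Category.assoc]

lemma unit_comp_comul (h : IsSkewLeftWarping T (𝟙_ V) v v₀ k) (X Y : V) :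
    unit k (X ⊗ Y) ≫ comul v k X Y = unit k X ⊗ₘ unit k Y := by
  rw [comul, ← reassoc_of% (h.unit_naturality (unit k X ▷ Y)), h.unit_comp_v,
    MonoidalCategory.tensorHom_def]

lemma comul_coassoc (h : IsSkewLeftWarping T (𝟙_ V) v v₀ k) (X Y Z : V) :
    T.map (α_ X Y Z).hom ≫ comul v k X (Y ⊗ Z) ≫ (T.obj X ◁ comul v k Y Z) =
      comul v k (X ⊗ Y) Z ≫ (comul v k X Y ▷ T.obj Z) ≫ (α_ _ _ _).hom := by
  have hα : (α_ X Y Z).hom ≫ (unit k X ▷ (Y ⊗ Z)) ≫ (T.obj X ◁ (unit k Y ▷ Z)) =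
      ((unit k (X ⊗ Y) ≫ comul v k X Y) ▷ Z) ≫ (α_ _ _ _).hom := by
    rw [h.unit_comp_comul, MonoidalCategory.tensorHom_def, comp_whiskerRight]; monoidal
  have W1 := h.2.2.1
  calc T.map (α_ X Y Z).hom ≫ comul v k X (Y ⊗ Z) ≫ (T.obj X ◁ comul v k Y Z)
      = T.map (unit k (X ⊗ Y) ▷ Z) ≫ T.map (T.map (unit k X ▷ Y) ▷ Z) ≫
          T.map (v X Y ▷ Z) ≫ T.map (α_ _ _ _).hom ≫ v X (T.obj Y ⊗ Z) ≫
          (T.obj X ◁ v Y Z) := by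
        simp only [comul, MonoidalCategory.whiskerLeft_comp, Category.assoc]
        rw [← reassoc_of% (h.map_whiskerLeft_comp_v X (unit k Y ▷ Z)), ← Functor.map_comp_assoc,
          ← Functor.map_comp_assoc, Category.assoc, hα]
        simp only [comul, comp_whiskerRight, Functor.map_comp, Category.assoc]
    _ = comul v k (X ⊗ Y) Z ≫ (comul v k X Y ▷ T.obj Z) ≫ (α_ _ _ _).hom := by
        rw [← W1, reassoc_of% (h.map_whiskerRight_comp_v (unit k X ▷ Y) Z), comul, comul,
          comp_whiskerRight]
        simp only [Category.assoc]

lemma comul_counit_left (h : IsSkewLeftWarping T (𝟙_ V) v v₀ k) (X : V) :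
    comul v k (𝟙_ V) X ≫ (v₀ ▷ T.obj X) ≫ (λ_ (T.obj X)).hom = T.map (λ_ X).hom := by
  have W2 := h.2.2.2.1
  rw [comul, Category.assoc, W2, ← Functor.map_comp_assoc, ← comp_whiskerRight,
    h.unit_comp_v₀, id_whiskerRight, CategoryTheory.Functor.map_id, Category.id_comp]

lemma comul_counit_right (h : IsSkewLeftWarping T (𝟙_ V) v v₀ k) (X : V) :
    comul v k X (𝟙_ V) ≫ (T.obj X ◁ v₀) ≫ (ρ_ (T.obj X)).hom = T.map (ρ_ X).hom := by
  have hρ : unit k X ▷ 𝟙_ V = (ρ_ X).hom ≫ k X := by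
    simp [unit]
  obtain ⟨-, -, -, -, W3, -⟩ := h
  simp only [comul, hρ, Functor.map_comp, Category.assoc]
  rw [reassoc_of% (W3 X), Iso.inv_hom_id, Category.comp_id]

lemma comul_comp_mul_tensorHom_mul (h : IsSkewLeftWarping T (𝟙_ V) v v₀ k) (X Y : V) :
    comul v k (T.obj X) (T.obj Y) ≫ (mul v v₀ X ⊗ₘ mul v v₀ Y) =
      v X (T.obj Y) ≫ (T.obj X ◁ mul v v₀ Y) := by
  rw [comul, MonoidalCategory.tensorHom_def, Category.assoc,
    ← reassoc_of% (h.map_mul_whiskerRight_comp_v X (T.obj Y)), ← Functor.map_comp_assoc,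
    ← comp_whiskerRight, h.unit_comp_mul, id_whiskerRight, CategoryTheory.Functor.map_id,
    Category.id_comp]

lemma map_comul_comp_comul_comp_mul (h : IsSkewLeftWarping T (𝟙_ V) v v₀ k) (X Y : V) :
    T.map (comul v k X Y) ≫ comul v k (T.obj X) (T.obj Y) ≫ (mul v v₀ X ⊗ₘ mul v v₀ Y) =
      mul v v₀ (X ⊗ Y) ≫ comul v k X Y := by
  rw [h.comul_comp_mul_tensorHom_mul, comul, Functor.map_comp_assoc, ← h.mul_comp_v,
    reassoc_of% (h.mul_naturality _)]

end IsSkewLeftWarping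

/-- A skew left warping `(T, I, v, v₀, k)` of a monoidal category `V`
whose object `K` is the unit `I` determines an opmonoidal monad on `V` with
`μ_X = ρ_{TX}⁻¹ ∘ (1_{TX} ⊗ v₀) ∘ v_{X,I} ∘ T(ρ_{TX})`, `η_X = ρ_{TX}⁻¹ ∘ k_X`,
`ψ_{X,Y} = v_{X,Y} ∘ T(η_X ⊗ 1_Y)` and `ψ₀ = v₀`. -/
theorem skew_left_warping_gives_opmonoidal_monad (T : V ⥤ V)
    (v : ∀ X Y : V, T.obj (T.obj X ⊗ Y) ⟶ T.obj X ⊗ T.obj Y)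
    (v₀ : T.obj (𝟙_ V) ⟶ 𝟙_ V) (k : ∀ X : V, X ⟶ T.obj X ⊗ 𝟙_ V)
    (h : IsSkewLeftWarping T (𝟙_ V) v v₀ k) :
    IsOpmonoidalMonad T
      (fun X => T.map (ρ_ (T.obj X)).inv ≫ v X (𝟙_ V) ≫ (T.obj X ◁ v₀) ≫
        (ρ_ (T.obj X)).hom)
      (fun X => k X ≫ (ρ_ (T.obj X)).hom)
      (fun X Y => T.map ((k X ≫ (ρ_ (T.obj X)).hom) ▷ Y) ≫ v X Y)
      v₀ :=
  ⟨fun _ _ => h.mul_naturality, fun _ _ => h.unit_naturality, h.mul_assoc, h.unit_comp_mul,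
    h.map_unit_comp_mul, fun _ _ _ _ => h.comul_naturality, h.comul_coassoc,
    h.comul_counit_left, h.comul_counit_right, h.map_comul_comp_comul_comp_mul,
    h.map_v₀_comp_v₀, h.unit_comp_comul, h.unit_comp_v₀⟩
end

section
/- Let A be a monoidal category and T : A → A a functor. The construction sending an opmonoidal monad structure (μ, η, ψ, ψ₀) on T to the skew left warping (T, I, v, v₀, k) with v_{A,B} = (μ_A⊗1_{TB})∘ψ_{TA,B}, v₀ = ψ₀ and k_A = ρ_{TA}∘η_A, and the construction sending a skew left warping (T, I, v, v₀, k) with K = I to the opmonoidal monad structure with μ_A = ρ_{TA}⁻¹∘(1_{TA}⊗v₀)∘v_{A,I}∘T(ρ_{TA}), η_A = ρ_{TA}⁻¹∘k_A, ψ_{A,B} = v_{A,B}∘T(η_A⊗1_B), ψ₀ = v₀, are mutually inverse; hence there is a bijection between opmonoidal monad structures on T and skew left warpings of A with underlying functor T and K = I. -/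
/-!
Starting from an opmonoidal monad, `μ` is recovered by the right counit law of `ψ`, and `ψ`
by naturality of `ψ` and the unit law `T η ≫ μ = 1`. Starting from a warping with `K = I`,
naturality of `k` with (W4) and (W5) gives the unit law `η_{TX} ≫ μ_X = 1` of the induced
monad, and naturality of `v` with (W1) and (W2) gives
`v_{TX,Y} ≫ (μ_X ⊗ 1) = T(μ_X ⊗ 1) ≫ v_{X,Y}`; together they recover `v`.
-/

open CategoryTheory MonoidalCategory

variable {V : Type*} [Category V] [MonoidalCategory V]

theorem whiskerLeft_comp_rightUnitor_whiskerRight {B C : V} (g : C ⟶ 𝟙_ V) (Z : V) :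
    ((B ◁ g) ≫ (ρ_ B).hom) ▷ Z = (α_ B C Z).hom ≫ B ◁ ((g ▷ Z) ≫ (λ_ Z).hom) := by
  rw [comp_whiskerRight, ← triangle, whiskerLeft_comp, associator_naturality_middle_assoc]

section

variable (T : V ⥤ V)

def warpingOfMonadV (μ : ∀ X : V, T.obj (T.obj X) ⟶ T.obj X)
    (ψ : ∀ X Y : V, T.obj (X ⊗ Y) ⟶ T.obj X ⊗ T.obj Y) (X Y : V) :
    T.obj (T.obj X ⊗ Y) ⟶ T.obj X ⊗ T.obj Y :=
  ψ (T.obj X) Y ≫ (μ X ▷ T.obj Y)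

def warpingOfMonadK (η : ∀ X : V, X ⟶ T.obj X) (X : V) : X ⟶ T.obj X ⊗ 𝟙_ V :=
  η X ≫ (ρ_ (T.obj X)).inv

def monadOfWarpingMu (v : ∀ X Y : V, T.obj (T.obj X ⊗ Y) ⟶ T.obj X ⊗ T.obj Y)
    (v₀ : T.obj (𝟙_ V) ⟶ 𝟙_ V) (X : V) : T.obj (T.obj X) ⟶ T.obj X :=
  T.map (ρ_ (T.obj X)).inv ≫ v X (𝟙_ V) ≫ (T.obj X ◁ v₀) ≫ (ρ_ (T.obj X)).hom

def monadOfWarpingEta (k : ∀ X : V, X ⟶ T.obj X ⊗ 𝟙_ V) (X : V) : X ⟶ T.obj X :=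
  k X ≫ (ρ_ (T.obj X)).hom

def monadOfWarpingPsi (v : ∀ X Y : V, T.obj (T.obj X ⊗ Y) ⟶ T.obj X ⊗ T.obj Y)
    (k : ∀ X : V, X ⟶ T.obj X ⊗ 𝟙_ V) (X Y : V) : T.obj (X ⊗ Y) ⟶ T.obj X ⊗ T.obj Y :=
  T.map (monadOfWarpingEta T k X ▷ Y) ≫ v X Y

@[simp]
theorem monadOfWarpingEta_warpingOfMonadK (η : ∀ X : V, X ⟶ T.obj X) (X : V) :
    monadOfWarpingEta T (warpingOfMonadK T η) X = η X := by
  simp [monadOfWarpingEta, warpingOfMonadK]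

@[simp]
theorem warpingOfMonadK_monadOfWarpingEta (k : ∀ X : V, X ⟶ T.obj X ⊗ 𝟙_ V) (X : V) :
    warpingOfMonadK T (monadOfWarpingEta T k) X = k X := by
  simp [monadOfWarpingEta, warpingOfMonadK]

section OpmonoidalMonad

variable {T} {μ : ∀ X : V, T.obj (T.obj X) ⟶ T.obj X} {η : ∀ X : V, X ⟶ T.obj X}
  {ψ : ∀ X Y : V, T.obj (X ⊗ Y) ⟶ T.obj X ⊗ T.obj Y} {ψ₀ : T.obj (𝟙_ V) ⟶ 𝟙_ V}

theorem monadOfWarpingMu_warpingOfMonadV (h : IsOpmonoidalMonad T μ η ψ ψ₀) (X : V) :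
    monadOfWarpingMu T (warpingOfMonadV T μ ψ) ψ₀ X = μ X := by
  obtain ⟨-, -, -, -, -, -, -, -, counit_right, -⟩ := h
  rw [monadOfWarpingMu, warpingOfMonadV, Category.assoc, ← whisker_exchange_assoc,
    rightUnitor_naturality, reassoc_of% counit_right, ← T.map_comp_assoc, Iso.inv_hom_id,
    T.map_id, Category.id_comp]

theorem monadOfWarpingPsi_warpingOfMonadV (h : IsOpmonoidalMonad T μ η ψ ψ₀) (X Y : V) :
    monadOfWarpingPsi T (warpingOfMonadV T μ ψ) (warpingOfMonadK T η) X Y = ψ X Y := by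
  obtain ⟨-, -, -, -, unit_right, nat_ψ, -⟩ := h
  have hψ : T.map (η X ▷ Y) ≫ ψ (T.obj X) Y = ψ X Y ≫ (T.map (η X) ▷ T.obj Y) := by
    simpa only [tensorHom_id, T.map_id] using nat_ψ _ _ _ _ (η X) (𝟙 Y)
  simp only [monadOfWarpingPsi, warpingOfMonadV, monadOfWarpingEta_warpingOfMonadK,
    reassoc_of% hψ, ← comp_whiskerRight, unit_right, id_whiskerRight, Category.comp_id]

end OpmonoidalMonad

section SkewLeftWarping

variable {T} {v : ∀ X Y : V, T.obj (T.obj X ⊗ Y) ⟶ T.obj X ⊗ T.obj Y}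
  {v₀ : T.obj (𝟙_ V) ⟶ 𝟙_ V} {k : ∀ X : V, X ⟶ T.obj X ⊗ 𝟙_ V}

theorem monadOfWarpingMu_whiskerRight (X Z : V) :
    monadOfWarpingMu T v v₀ X ▷ Z = (T.map (ρ_ (T.obj X)).inv ▷ Z) ≫ (v X (𝟙_ V) ▷ Z) ≫
      (α_ _ _ _).hom ≫ T.obj X ◁ ((v₀ ▷ Z) ≫ (λ_ Z).hom) := by
  simp only [monadOfWarpingMu, comp_whiskerRight, ← whiskerLeft_comp_rightUnitor_whiskerRight]

theorem monadOfWarpingEta_comp_monadOfWarpingMu (h : IsSkewLeftWarping T (𝟙_ V) v v₀ k)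
    (X : V) : monadOfWarpingEta T k (T.obj X) ≫ monadOfWarpingMu T v v₀ X = 𝟙 (T.obj X) := by
  obtain ⟨-, nat_k, -, -, -, w4, w5⟩ := h
  have hk : k (T.obj X ⊗ 𝟙_ V) ≫ ((v X (𝟙_ V) ≫ (T.obj X ◁ v₀) ≫ (ρ_ (T.obj X)).hom) ▷ 𝟙_ V) =
      𝟙 _ := by
    rw [comp_whiskerRight, whiskerLeft_comp_rightUnitor_whiskerRight, reassoc_of% w4,
      ← whiskerLeft_comp, w5, whiskerLeft_id]
  rw [monadOfWarpingEta, monadOfWarpingMu, Category.assoc, ← rightUnitor_naturality_assoc,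
    ← reassoc_of% nat_k, ← rightUnitor_naturality, reassoc_of% hk, Iso.inv_hom_id]

theorem warping_comp_monadOfWarpingMu_whiskerRight (h : IsSkewLeftWarping T (𝟙_ V) v v₀ k)
    (X Y : V) : v (T.obj X) Y ≫ (monadOfWarpingMu T v v₀ X ▷ T.obj Y) =
      T.map (monadOfWarpingMu T v v₀ X ▷ Y) ≫ v X Y := by
  obtain ⟨nat_v, -, w1, w2, -⟩ := h
  have nat_left : v (T.obj X) Y ≫ (T.map (ρ_ (T.obj X)).inv ▷ T.obj Y) =
      T.map (T.map (ρ_ (T.obj X)).inv ▷ Y) ≫ v (T.obj X ⊗ 𝟙_ V) Y := by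
    simpa only [tensorHom_id, T.map_id] using (nat_v _ _ _ _ (ρ_ (T.obj X)).inv (𝟙 Y)).symm
  have nat_right : v X (T.obj (𝟙_ V) ⊗ Y) ≫ (T.obj X ◁ T.map ((v₀ ▷ Y) ≫ (λ_ Y).hom)) =
      T.map (T.obj X ◁ ((v₀ ▷ Y) ≫ (λ_ Y).hom)) ≫ v X Y := by
    simpa only [id_tensorHom, T.map_id] using (nat_v _ _ _ _ (𝟙 X) ((v₀ ▷ Y) ≫ (λ_ Y).hom)).symm
  calc v (T.obj X) Y ≫ (monadOfWarpingMu T v v₀ X ▷ T.obj Y)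
      = T.map (T.map (ρ_ _).inv ▷ Y) ≫
          (v _ Y ≫ (v X (𝟙_ V) ▷ T.obj Y) ≫ (α_ _ _ _).hom) ≫
          T.obj X ◁ ((v₀ ▷ T.obj Y) ≫ (λ_ (T.obj Y)).hom) := by
        rw [monadOfWarpingMu_whiskerRight, reassoc_of% nat_left]
        simp only [Category.assoc]
    _ = T.map (T.map (ρ_ _).inv ▷ Y) ≫ T.map (v X (𝟙_ V) ▷ Y) ≫ T.map (α_ _ _ _).hom ≫
          v X (T.obj (𝟙_ V) ⊗ Y) ≫
          T.obj X ◁ (v (𝟙_ V) Y ≫ (v₀ ▷ T.obj Y) ≫ (λ_ (T.obj Y)).hom) := by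
        rw [w1]
        simp only [Category.assoc, whiskerLeft_comp]
    _ = T.map (monadOfWarpingMu T v v₀ X ▷ Y) ≫ v X Y := by
        rw [w2, ← T.map_comp, nat_right, monadOfWarpingMu_whiskerRight]
        simp only [T.map_comp, Category.assoc]

theorem warpingOfMonadV_monadOfWarpingMu (h : IsSkewLeftWarping T (𝟙_ V) v v₀ k) (X Y : V) :
    warpingOfMonadV T (monadOfWarpingMu T v v₀) (monadOfWarpingPsi T v k) X Y = v X Y := by
  rw [warpingOfMonadV, monadOfWarpingPsi, Category.assoc,
    warping_comp_monadOfWarpingMu_whiskerRight h, ← T.map_comp_assoc, ← comp_whiskerRight,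
    monadOfWarpingEta_comp_monadOfWarpingMu h, id_whiskerRight, T.map_id, Category.id_comp]

end SkewLeftWarping

end

/-- For a functor `T` on a monoidal category `V`, the constructions
`(μ, η, ψ, ψ₀) ↦ (v_{X,Y} = (μ_X ⊗ 1) ∘ ψ_{TX,Y}, v₀ = ψ₀, k_X = ρ_{TX} ∘ η_X)` and
`(v, v₀, k) ↦ (μ_X = ρ⁻¹ ∘ (1 ⊗ v₀) ∘ v_{X,I} ∘ T(ρ), η_X = ρ⁻¹ ∘ k_X,
ψ_{X,Y} = v_{X,Y} ∘ T(η_X ⊗ 1), ψ₀ = v₀)` are mutually inverse, giving a bijection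
between opmonoidal monad structures on `T` and skew left warpings of `V` with underlying
functor `T` and `K = I`. -/
theorem opmonoidal_monad_skew_left_warping_bijection (T : V ⥤ V) :
    -- round trip starting from an opmonoidal monad
    (∀ (μ : ∀ X : V, T.obj (T.obj X) ⟶ T.obj X) (η : ∀ X : V, X ⟶ T.obj X)
        (ψ : ∀ X Y : V, T.obj (X ⊗ Y) ⟶ T.obj X ⊗ T.obj Y)
        (ψ₀ : T.obj (𝟙_ V) ⟶ 𝟙_ V),
      IsOpmonoidalMonad T μ η ψ ψ₀ →
        ((∀ X : V,
            T.map (ρ_ (T.obj X)).inv ≫ (ψ (T.obj X) (𝟙_ V) ≫ (μ X ▷ T.obj (𝟙_ V))) ≫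
              (T.obj X ◁ ψ₀) ≫ (ρ_ (T.obj X)).hom = μ X) ∧
         (∀ X : V, (η X ≫ (ρ_ (T.obj X)).inv) ≫ (ρ_ (T.obj X)).hom = η X) ∧
         (∀ X Y : V,
            T.map (((η X ≫ (ρ_ (T.obj X)).inv) ≫ (ρ_ (T.obj X)).hom) ▷ Y) ≫
              (ψ (T.obj X) Y ≫ (μ X ▷ T.obj Y)) = ψ X Y))) ∧
    -- round trip starting from a skew left warping with K = I
    (∀ (v : ∀ X Y : V, T.obj (T.obj X ⊗ Y) ⟶ T.obj X ⊗ T.obj Y)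
        (v₀ : T.obj (𝟙_ V) ⟶ 𝟙_ V) (k : ∀ X : V, X ⟶ T.obj X ⊗ 𝟙_ V),
      IsSkewLeftWarping T (𝟙_ V) v v₀ k →
        ((∀ X Y : V,
            (T.map ((k (T.obj X) ≫ (ρ_ (T.obj (T.obj X))).hom) ▷ Y) ≫ v (T.obj X) Y) ≫
              ((T.map (ρ_ (T.obj X)).inv ≫ v X (𝟙_ V) ≫ (T.obj X ◁ v₀) ≫
                  (ρ_ (T.obj X)).hom) ▷ T.obj Y) = v X Y) ∧
         (∀ X : V, (k X ≫ (ρ_ (T.obj X)).hom) ≫ (ρ_ (T.obj X)).inv = k X))) := by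
  refine ⟨fun μ η ψ ψ₀ h => ⟨monadOfWarpingMu_warpingOfMonadV h,
    monadOfWarpingEta_warpingOfMonadK T η, monadOfWarpingPsi_warpingOfMonadV h⟩,
    fun v v₀ k h => ⟨warpingOfMonadV_monadOfWarpingMu h, warpingOfMonadK_monadOfWarpingEta T k⟩⟩
end

section
/- Let A be a monoidal category and let (T, K, v, v₀, k) be a skew left warping of A. Then the following data define a left skew-monoidal structure on the underlying category of A: tensor product A∗B = TA⊗B; unit object K; associativity constraint α*_{A,B,C} = α_{TA,TB,C}∘(v_{A,B}⊗1_C) : T(TA⊗B)⊗C → TA⊗(TB⊗C); left unit constraint λ*_B = λ_B∘(v₀⊗1_B) : TK⊗B → B; right unit constraint ρ*_A = k_A : A → TA⊗K. That is, (∗, K, α*, λ*, ρ*) satisfies the five left skew-monoidal axioms. -/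
open CategoryTheory MonoidalCategory

variable {V : Type*} [Category V] [MonoidalCategory V]

/-- The associativity constraint `α*_{X,Y,Z} = α_{TX,TY,Z} ∘ (v_{X,Y} ⊗ 1_Z)` of the
skew tensor `X ∗ Y = TX ⊗ Y` induced by a skew left warping. -/
def warpAssoc (T : V ⥤ V)
    (v : ∀ X Y : V, T.obj (T.obj X ⊗ Y) ⟶ T.obj X ⊗ T.obj Y) (X Y Z : V) :
    T.obj (T.obj X ⊗ Y) ⊗ Z ⟶ T.obj X ⊗ (T.obj Y ⊗ Z) :=
  (v X Y ▷ Z) ≫ (α_ (T.obj X) (T.obj Y) Z).hom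

/-!
Each skew-monoidal axiom is a warping axiom whiskered by the remaining variable and conjugated
by coherence isomorphisms of `V`: the pentagon is (W1) ▷ W followed by Mac Lane's pentagon,
axiom (2) is (W3) ▷ Y followed by the triangle identity, axiom (3) is (W2) ▷ Y together with
`λ_{X ⊗ Y} = α_{I,X,Y} ≫ λ_X ▷ Y`, and axioms (4), (5) are (W4), (W5) themselves.
-/

section

variable (T : V ⥤ V) (v : ∀ X Y : V, T.obj (T.obj X ⊗ Y) ⟶ T.obj X ⊗ T.obj Y)

theorem warpAssoc_pentagon
    (hv : ∀ X Y Z : V,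
      v (T.obj X ⊗ Y) Z ≫ (v X Y ▷ T.obj Z) ≫ (α_ (T.obj X) (T.obj Y) (T.obj Z)).hom =
        T.map (v X Y ▷ Z) ≫ T.map (α_ (T.obj X) (T.obj Y) Z).hom ≫
          v X (T.obj Y ⊗ Z) ≫ (T.obj X ◁ v Y Z))
    (X Y Z W : V) :
    (T.map (warpAssoc T v X Y Z) ▷ W) ≫ warpAssoc T v X (T.obj Y ⊗ Z) W ≫
        (T.obj X ◁ warpAssoc T v Y Z W) =
      warpAssoc T v (T.obj X ⊗ Y) Z W ≫ warpAssoc T v X Y (T.obj Z ⊗ W) :=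
  calc _ = (T.map (v X Y ▷ Z) ≫ T.map (α_ (T.obj X) (T.obj Y) Z).hom ≫
          v X (T.obj Y ⊗ Z) ≫ (T.obj X ◁ v Y Z)) ▷ W ≫
            (α_ _ _ _).hom ≫ T.obj X ◁ (α_ _ _ _).hom := by
        simp only [warpAssoc, Functor.map_comp]; monoidal
    _ = (v (T.obj X ⊗ Y) Z ≫ (v X Y ▷ T.obj Z) ≫ (α_ (T.obj X) (T.obj Y) (T.obj Z)).hom) ▷ W ≫
            (α_ _ _ _).hom ≫ T.obj X ◁ (α_ _ _ _).hom := by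
        rw [hv]
    _ = _ := by
        simp only [warpAssoc]; monoidal

theorem warpAssoc_unit_middle {K : V} (v₀ : T.obj K ⟶ 𝟙_ V) (k : ∀ X : V, X ⟶ T.obj X ⊗ K)
    (hk : ∀ X : V, T.map (k X) ≫ v X K ≫ (T.obj X ◁ v₀) = (ρ_ (T.obj X)).inv) (X Y : V) :
    (T.map (k X) ▷ Y) ≫ warpAssoc T v X K Y ≫ (T.obj X ◁ ((v₀ ▷ Y) ≫ (λ_ Y).hom)) =
      𝟙 (T.obj X ⊗ Y) :=
  calc _ = (T.map (k X) ≫ v X K ≫ (T.obj X ◁ v₀)) ▷ Y ≫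
            (α_ _ _ _).hom ≫ T.obj X ◁ (λ_ Y).hom := by
        simp only [warpAssoc]; monoidal
    _ = (ρ_ (T.obj X)).inv ▷ Y ≫ (α_ _ _ _).hom ≫ T.obj X ◁ (λ_ Y).hom := by
        rw [hk]
    _ = 𝟙 _ := by
        monoidal

theorem warpAssoc_unit_left {K : V} (v₀ : T.obj K ⟶ 𝟙_ V)
    (hv₀ : ∀ Y : V,
      v K Y ≫ (v₀ ▷ T.obj Y) ≫ (λ_ (T.obj Y)).hom = T.map (v₀ ▷ Y) ≫ T.map (λ_ Y).hom)
    (X Y : V) :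
    warpAssoc T v K X Y ≫ (v₀ ▷ (T.obj X ⊗ Y)) ≫ (λ_ (T.obj X ⊗ Y)).hom =
      T.map ((v₀ ▷ X) ≫ (λ_ X).hom) ▷ Y :=
  calc _ = (v K X ≫ (v₀ ▷ T.obj X) ≫ (λ_ (T.obj X)).hom) ▷ Y := by
        simp only [warpAssoc]; monoidal
    _ = _ := by
        rw [hv₀, Functor.map_comp]

end

/-- A skew left warping `(T, K, v, v₀, k)` of a monoidal category `V`
determines a left skew-monoidal structure on `V` with tensor `X ∗ Y = TX ⊗ Y`, unit `K`,
associativity `α* = α ∘ (v ⊗ 1)`, left unit `λ* = λ ∘ (v₀ ⊗ 1)` and right unit `ρ* = k`: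
the five left skew-monoidal axioms hold. -/
theorem skew_left_warping_gives_skew_monoidal (T : V ⥤ V) (K : V)
    (v : ∀ X Y : V, T.obj (T.obj X ⊗ Y) ⟶ T.obj X ⊗ T.obj Y)
    (v₀ : T.obj K ⟶ 𝟙_ V) (k : ∀ X : V, X ⟶ T.obj X ⊗ K)
    (h : IsSkewLeftWarping T K v v₀ k) :
    -- (1) pentagon
    (∀ X Y Z W : V,
      (T.map (warpAssoc T v X Y Z) ▷ W) ≫ warpAssoc T v X (T.obj Y ⊗ Z) W ≫
          (T.obj X ◁ warpAssoc T v Y Z W) =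
        warpAssoc T v (T.obj X ⊗ Y) Z W ≫ warpAssoc T v X Y (T.obj Z ⊗ W)) ∧
    -- (2)
    (∀ X Y : V,
      (T.map (k X) ▷ Y) ≫ warpAssoc T v X K Y ≫
          (T.obj X ◁ ((v₀ ▷ Y) ≫ (λ_ Y).hom)) = 𝟙 (T.obj X ⊗ Y)) ∧
    -- (3)
    (∀ X Y : V,
      warpAssoc T v K X Y ≫ (v₀ ▷ (T.obj X ⊗ Y)) ≫ (λ_ (T.obj X ⊗ Y)).hom =
        T.map ((v₀ ▷ X) ≫ (λ_ X).hom) ▷ Y) ∧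
    -- (4)
    (∀ X Y : V,
      k (T.obj X ⊗ Y) ≫ warpAssoc T v X Y K = T.obj X ◁ k Y) ∧
    -- (5)
    (k K ≫ (v₀ ▷ K) ≫ (λ_ K).hom = 𝟙 K) := by
  obtain ⟨-, -, hW1, hW2, hW3, hW4, hW5⟩ := h
  exact ⟨warpAssoc_pentagon T v hW1, warpAssoc_unit_middle T v v₀ k hW3,
    warpAssoc_unit_left T v v₀ hW2,
    fun X Y => by simpa only [warpAssoc, Category.assoc] using hW4 X Y, hW5⟩
end

section
/- Let A be a monoidal category and let K be an object of A with a right dual R, with unit η : I → R⊗K and counit ε : K⊗R → I. Then the following data define a left skew-monoidal structure on the underlying category of A whose associativity constraint is invertible (a Hopf left skew-monoidal structure): tensor product A∗B = A⊗R⊗B; unit object K; associativity constraint α*_{A,B,C} : (A⊗R⊗B)⊗R⊗C → A⊗R⊗(B⊗R⊗C) the canonical coherence isomorphism of A; left unit constraint λ*_B = ε⊗1_B : K⊗R⊗B → B; right unit constraint ρ*_A = 1_A⊗η : A → A⊗R⊗K. That is, the five left skew-monoidal axioms hold and α* is invertible. -/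
open CategoryTheory MonoidalCategory

variable {V : Type*} [Category V] [MonoidalCategory V]

/-- The associativity constraint of the skew tensor `X ∗ Y = (X ⊗ R) ⊗ Y` coming from a
right dual `R` of `K`: the canonical coherence isomorphism
`(X∗Y)∗Z = (((X⊗R)⊗Y)⊗R)⊗Z ≅ (X⊗R)⊗((Y⊗R)⊗Z) = X∗(Y∗Z)`. -/
def dualAssoc (R X Y Z : V) :
    (((X ⊗ R) ⊗ Y) ⊗ R) ⊗ Z ⟶ (X ⊗ R) ⊗ ((Y ⊗ R) ⊗ Z) :=
  (α_ ((X ⊗ R) ⊗ Y) R Z).hom ≫ (α_ (X ⊗ R) Y (R ⊗ Z)).hom ≫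
    ((X ⊗ R) ◁ (α_ Y R Z).inv)

/-- The left unit constraint `λ*_B = ε ⊗ 1_B : K ∗ B = (K ⊗ R) ⊗ B ⟶ B`. -/
def dualLambda {K R : V} (ε : K ⊗ R ⟶ 𝟙_ V) (B : V) : (K ⊗ R) ⊗ B ⟶ B :=
  (ε ▷ B) ≫ (λ_ B).hom

/-- The right unit constraint `ρ*_A = 1_A ⊗ η : A ⟶ A ∗ K = (A ⊗ R) ⊗ K`. -/
def dualRho {K R : V} (η : 𝟙_ V ⟶ R ⊗ K) (A : V) : A ⟶ (A ⊗ R) ⊗ K :=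
  (ρ_ A).inv ≫ (A ◁ η) ≫ (α_ A R K).inv

/-- If `K` has a right dual `R` in a monoidal category `V`, with unit
`η : I ⟶ R ⊗ K` and counit `ε : K ⊗ R ⟶ I`, then `X ∗ Y = (X ⊗ R) ⊗ Y` with unit `K`,
associativity the canonical coherence isomorphism, left unit `ε ⊗ 1` and right unit
`1 ⊗ η`, is a left skew-monoidal structure on `V` whose associativity constraint is
invertible (a Hopf left skew-monoidal structure). -/
theorem right_dual_hopf_skew_monoidal (K R : V)
    (η : 𝟙_ V ⟶ R ⊗ K) (ε : K ⊗ R ⟶ 𝟙_ V)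
    (htri1 : (ρ_ K).inv ≫ (K ◁ η) ≫ (α_ K R K).inv ≫ (ε ▷ K) ≫ (λ_ K).hom = 𝟙 K)
    (htri2 : (λ_ R).inv ≫ (η ▷ R) ≫ (α_ R K R).hom ≫ (R ◁ ε) ≫ (ρ_ R).hom = 𝟙 R) :
    -- (1) pentagon
    (∀ X Y Z W : V,
      ((dualAssoc R X Y Z ▷ R) ▷ W) ≫ dualAssoc R X ((Y ⊗ R) ⊗ Z) W ≫
          ((X ⊗ R) ◁ dualAssoc R Y Z W) =
        dualAssoc R ((X ⊗ R) ⊗ Y) Z W ≫ dualAssoc R X Y ((Z ⊗ R) ⊗ W)) ∧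
    -- (2)
    (∀ X Y : V,
      ((dualRho η X ▷ R) ▷ Y) ≫ dualAssoc R X K Y ≫ ((X ⊗ R) ◁ dualLambda ε Y) =
        𝟙 ((X ⊗ R) ⊗ Y)) ∧
    -- (3)
    (∀ X Y : V,
      dualAssoc R K X Y ≫ dualLambda ε ((X ⊗ R) ⊗ Y) =
        (dualLambda ε X ▷ R) ▷ Y) ∧
    -- (4)
    (∀ X Y : V,
      dualRho η ((X ⊗ R) ⊗ Y) ≫ dualAssoc R X Y K = (X ⊗ R) ◁ dualRho η Y) ∧
    -- (5)
    (dualRho η K ≫ dualLambda ε K = 𝟙 K) ∧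
    -- Hopf: the associativity constraint is invertible
    (∀ X Y Z : V, IsIso (dualAssoc R X Y Z)) := by
  refine ⟨?_, ?_, ?_, ?_, ?_, ?_⟩
  · intro X Y Z W; unfold dualAssoc; monoidal
  · intro X Y
    have h2' : (η ▷ R) ≫ (α_ R K R).hom ≫ (R ◁ ε) = (λ_ R).hom ≫ (ρ_ R).inv := by
      rw [← cancel_epi (λ_ R).inv, ← cancel_mono (ρ_ R).hom]; simpa using htri2
    have step : ((dualRho η X ▷ R) ▷ Y) ≫ dualAssoc R X K Y ≫ ((X ⊗ R) ◁ dualLambda ε Y) =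
        ((X ◁ (λ_ R).inv) ▷ Y) ≫ ((X ◁ ((η ▷ R) ≫ (α_ R K R).hom ≫ (R ◁ ε))) ▷ Y) ≫
          ((X ◁ (ρ_ R).hom) ▷ Y) := by
      unfold dualRho dualAssoc dualLambda; monoidal
    rw [step, h2']; monoidal
  · intro X Y; unfold dualAssoc dualLambda; monoidal
  · intro X Y; unfold dualAssoc dualRho; monoidal
  · unfold dualRho dualLambda; simpa using htri1
  · intro X Y Z; unfold dualAssoc; infer_instance
end

section
/- Let A be a monoidal category and let (T, μ, η, ψ, ψ₀) be an opmonoidal monad on A. Then the following data define a right skew-monoidal structure on the underlying category of A: tensor product A∗B = A⊗TB; unit object I; associativity constraint α'_{X,Y,Z} = (1_X⊗1_{TY}⊗μ_Z)∘(1_X⊗ψ_{Y,TZ}) : X⊗T(Y⊗TZ) → (X⊗TY)⊗TZ; left unit constraint λ'_X = η_X : X → I⊗TX (composed with the unit isomorphism); right unit constraint ρ'_X = 1_X⊗ψ₀ : X⊗TI → X (composed with the unit isomorphism). That is, the five right skew-monoidal axioms hold. -/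
/-!
Write `H_{Y,Z} = (1 ⊗ μ_Z) ∘ ψ_{Y,TZ} : T(Y ⊗ TZ) → TY ⊗ TZ` for the left fusion operator of
the opmonoidal monad, so that `α'_{X,Y,Z}` is `1_X ⊗ H_{Y,Z}` followed by an associator. Each
skew-monoidal axiom then becomes a statement about `H` alone. Because `μ` is opmonoidal and
associative, `H` is a morphism of `T`-algebras out of the free algebra `T(Z ⊗ TW)`, and together
with coassociativity of `ψ` this gives the fusion equation
`(1 ⊗ H_{Z,W}) ∘ H_{Y,Z⊗TW} = α ∘ (H_{Y,Z} ⊗ 1) ∘ H_{Y⊗TZ,W} ∘ T(α'_{Y,Z,W})`,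
which is the pentagon. The unit axioms come from the counitality of `ψ`, the opmonoidality of
`η` and of `ψ₀`, and the unit laws of the monad; the rest is monoidal coherence.
-/

open CategoryTheory MonoidalCategory

variable {V : Type*} [Category V] [MonoidalCategory V]

/-- The associativity constraint `α'_{X,Y,Z} = (1_X ⊗ 1_{TY} ⊗ μ_Z) ∘ (1_X ⊗ ψ_{Y,TZ})`
of the right skew tensor `X ∗ Y = X ⊗ TY` induced by an opmonoidal monad. -/
def rightWarpAssoc (T : V ⥤ V)
    (μ : ∀ X : V, T.obj (T.obj X) ⟶ T.obj X)
    (ψ : ∀ X Y : V, T.obj (X ⊗ Y) ⟶ T.obj X ⊗ T.obj Y) (X Y Z : V) :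
    X ⊗ T.obj (Y ⊗ T.obj Z) ⟶ (X ⊗ T.obj Y) ⊗ T.obj Z :=
  (X ◁ ψ Y (T.obj Z)) ≫ (X ◁ (T.obj Y ◁ μ Z)) ≫
    (α_ X (T.obj Y) (T.obj Z)).inv

/-- The left fusion operator `H_{X,Y}` of Bruguières, Lack and Virelizier. -/
def leftFusion (T : V ⥤ V) (μ : ∀ X : V, T.obj (T.obj X) ⟶ T.obj X)
    (ψ : ∀ X Y : V, T.obj (X ⊗ Y) ⟶ T.obj X ⊗ T.obj Y) (X Y : V) :
    T.obj (X ⊗ T.obj Y) ⟶ T.obj X ⊗ T.obj Y :=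
  ψ X (T.obj Y) ≫ (T.obj X ◁ μ Y)

section

variable {T : V ⥤ V} {μ : ∀ X : V, T.obj (T.obj X) ⟶ T.obj X} {η : ∀ X : V, X ⟶ T.obj X}
  {ψ : ∀ X Y : V, T.obj (X ⊗ Y) ⟶ T.obj X ⊗ T.obj Y} {ψ₀ : T.obj (𝟙_ V) ⟶ 𝟙_ V}

lemma rightWarpAssoc_eq_whiskerLeft_leftFusion (X Y Z : V) :
    rightWarpAssoc T μ ψ X Y Z =
      (X ◁ leftFusion T μ ψ Y Z) ≫ (α_ X (T.obj Y) (T.obj Z)).inv := by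
  rw [rightWarpAssoc, leftFusion, whiskerLeft_comp_assoc]

lemma map_whiskerLeft_comp_ψ
    (hψ : ∀ (X X' Y Y' : V) (f : X ⟶ X') (g : Y ⟶ Y'),
      T.map (f ⊗ₘ g) ≫ ψ X' Y' = ψ X Y ≫ (T.map f ⊗ₘ T.map g))
    (X : V) {Y Y' : V} (g : Y ⟶ Y') :
    T.map (X ◁ g) ≫ ψ X Y' = ψ X Y ≫ (T.obj X ◁ T.map g) := by
  simpa using hψ X X Y Y' (𝟙 X) g

lemma ψ_comp_whiskerLeft_ψ
    (hψassoc : ∀ X Y Z : V,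
      T.map (α_ X Y Z).hom ≫ ψ X (Y ⊗ Z) ≫ (T.obj X ◁ ψ Y Z) =
        ψ (X ⊗ Y) Z ≫ (ψ X Y ▷ T.obj Z) ≫ (α_ (T.obj X) (T.obj Y) (T.obj Z)).hom)
    (X Y Z : V) :
    ψ X (Y ⊗ Z) ≫ (T.obj X ◁ ψ Y Z) =
      T.map (α_ X Y Z).inv ≫ ψ (X ⊗ Y) Z ≫ (ψ X Y ▷ T.obj Z) ≫
        (α_ (T.obj X) (T.obj Y) (T.obj Z)).hom := by
  rw [← hψassoc, ← T.map_comp_assoc, Iso.inv_hom_id, T.map_id, Category.id_comp]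

lemma μ_comp_leftFusion
    (hψ : ∀ (X X' Y Y' : V) (f : X ⟶ X') (g : Y ⟶ Y'),
      T.map (f ⊗ₘ g) ≫ ψ X' Y' = ψ X Y ≫ (T.map f ⊗ₘ T.map g))
    (hμassoc : ∀ X : V, μ (T.obj X) ≫ μ X = T.map (μ X) ≫ μ X)
    (hμψ : ∀ X Y : V,
      T.map (ψ X Y) ≫ ψ (T.obj X) (T.obj Y) ≫ (μ X ⊗ₘ μ Y) = μ (X ⊗ Y) ≫ ψ X Y)
    (Z W : V) :
    μ (Z ⊗ T.obj W) ≫ leftFusion T μ ψ Z W =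
      T.map (leftFusion T μ ψ Z W) ≫ ψ (T.obj Z) (T.obj W) ≫ (μ Z ⊗ₘ μ W) := by
  have hμμ : (T.obj (T.obj Z) ◁ T.map (μ W)) ≫ (μ Z ⊗ₘ μ W) =
      (μ Z ⊗ₘ μ (T.obj W)) ≫ (T.obj Z ◁ μ W) := by
    rw [MonoidalCategory.tensorHom_def, MonoidalCategory.tensorHom_def, whisker_exchange_assoc]
    simp only [Category.assoc, ← whiskerLeft_comp, hμassoc]
  rw [leftFusion, T.map_comp, Category.assoc, reassoc_of% (map_whiskerLeft_comp_ψ hψ), hμμ,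
    reassoc_of% (hμψ Z (T.obj W))]

lemma leftFusion_fusion_equation
    (hψ : ∀ (X X' Y Y' : V) (f : X ⟶ X') (g : Y ⟶ Y'),
      T.map (f ⊗ₘ g) ≫ ψ X' Y' = ψ X Y ≫ (T.map f ⊗ₘ T.map g))
    (hψassoc : ∀ X Y Z : V,
      T.map (α_ X Y Z).hom ≫ ψ X (Y ⊗ Z) ≫ (T.obj X ◁ ψ Y Z) =
        ψ (X ⊗ Y) Z ≫ (ψ X Y ▷ T.obj Z) ≫ (α_ (T.obj X) (T.obj Y) (T.obj Z)).hom)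
    (hμassoc : ∀ X : V, μ (T.obj X) ≫ μ X = T.map (μ X) ≫ μ X)
    (hμψ : ∀ X Y : V,
      T.map (ψ X Y) ≫ ψ (T.obj X) (T.obj Y) ≫ (μ X ⊗ₘ μ Y) = μ (X ⊗ Y) ≫ ψ X Y)
    (Y Z W : V) :
    leftFusion T μ ψ Y (Z ⊗ T.obj W) ≫ (T.obj Y ◁ leftFusion T μ ψ Z W) =
      T.map (rightWarpAssoc T μ ψ Y Z W) ≫ leftFusion T μ ψ (Y ⊗ T.obj Z) W ≫
        (leftFusion T μ ψ Y Z ▷ T.obj W) ≫ (α_ (T.obj Y) (T.obj Z) (T.obj W)).hom := by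
  calc leftFusion T μ ψ Y (Z ⊗ T.obj W) ≫ (T.obj Y ◁ leftFusion T μ ψ Z W)
      = ψ Y _ ≫ (T.obj Y ◁ (T.map (leftFusion T μ ψ Z W) ≫ ψ (T.obj Z) (T.obj W) ≫
          (μ Z ⊗ₘ μ W))) := by
        rw [leftFusion, Category.assoc, ← whiskerLeft_comp, μ_comp_leftFusion hψ hμassoc hμψ]
    _ = T.map (Y ◁ leftFusion T μ ψ Z W) ≫ ψ Y (T.obj Z ⊗ T.obj W) ≫
          (T.obj Y ◁ ψ (T.obj Z) (T.obj W)) ≫ (T.obj Y ◁ (μ Z ⊗ₘ μ W)) := by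
        rw [reassoc_of% (map_whiskerLeft_comp_ψ hψ), whiskerLeft_comp, whiskerLeft_comp]
    _ = _ := by
        rw [rightWarpAssoc_eq_whiskerLeft_leftFusion, T.map_comp, Category.assoc,
          reassoc_of% (ψ_comp_whiskerLeft_ψ hψassoc)]
        simp only [leftFusion, whisker_exchange_assoc, comp_whiskerRight, Category.assoc,
          associator_naturality_right, associator_naturality_middle_assoc,
          MonoidalCategory.tensorHom_def, whiskerLeft_comp]

lemma rightWarpAssoc_pentagon
    (hψ : ∀ (X X' Y Y' : V) (f : X ⟶ X') (g : Y ⟶ Y'),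
      T.map (f ⊗ₘ g) ≫ ψ X' Y' = ψ X Y ≫ (T.map f ⊗ₘ T.map g))
    (hψassoc : ∀ X Y Z : V,
      T.map (α_ X Y Z).hom ≫ ψ X (Y ⊗ Z) ≫ (T.obj X ◁ ψ Y Z) =
        ψ (X ⊗ Y) Z ≫ (ψ X Y ▷ T.obj Z) ≫ (α_ (T.obj X) (T.obj Y) (T.obj Z)).hom)
    (hμassoc : ∀ X : V, μ (T.obj X) ≫ μ X = T.map (μ X) ≫ μ X)
    (hμψ : ∀ X Y : V,
      T.map (ψ X Y) ≫ ψ (T.obj X) (T.obj Y) ≫ (μ X ⊗ₘ μ Y) = μ (X ⊗ Y) ≫ ψ X Y)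
    (X Y Z W : V) :
    rightWarpAssoc T μ ψ X Y (Z ⊗ T.obj W) ≫ rightWarpAssoc T μ ψ (X ⊗ T.obj Y) Z W =
      (X ◁ T.map (rightWarpAssoc T μ ψ Y Z W)) ≫ rightWarpAssoc T μ ψ X (Y ⊗ T.obj Z) W ≫
        (rightWarpAssoc T μ ψ X Y Z ▷ T.obj W) := by
  simp only [rightWarpAssoc_eq_whiskerLeft_leftFusion, Category.assoc,
    ← associator_inv_naturality_right_assoc, ← whiskerLeft_comp_assoc,
    leftFusion_fusion_equation hψ hψassoc hμassoc hμψ Y Z W]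
  monoidal

lemma map_leftUnitor_inv_comp_ψ_comp_whiskerRight
    (hψl : ∀ X : V, ψ (𝟙_ V) X ≫ (ψ₀ ▷ T.obj X) ≫ (λ_ (T.obj X)).hom = T.map (λ_ X).hom)
    (X : V) :
    T.map (λ_ X).inv ≫ ψ (𝟙_ V) X ≫ (ψ₀ ▷ T.obj X) = (λ_ (T.obj X)).inv := by
  rw [← cancel_mono (λ_ (T.obj X)).hom, Category.assoc, Category.assoc, hψl, ← T.map_comp,
    Iso.inv_hom_id, T.map_id, Iso.inv_hom_id]

lemma rightWarp_triangle
    (hψl : ∀ X : V, ψ (𝟙_ V) X ≫ (ψ₀ ▷ T.obj X) ≫ (λ_ (T.obj X)).hom = T.map (λ_ X).hom)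
    (hTημ : ∀ X : V, T.map (η X) ≫ μ X = 𝟙 (T.obj X))
    (X Y : V) :
    (X ◁ T.map (η Y ≫ (λ_ (T.obj Y)).inv)) ≫ rightWarpAssoc T μ ψ X (𝟙_ V) Y ≫
        (((X ◁ ψ₀) ≫ (ρ_ X).hom) ▷ T.obj Y) = 𝟙 (X ⊗ T.obj Y) := by
  have hunit : T.map (η Y ≫ (λ_ (T.obj Y)).inv) ≫ leftFusion T μ ψ (𝟙_ V) Y ≫
      (ψ₀ ▷ T.obj Y) = (λ_ (T.obj Y)).inv := by
    rw [leftFusion, Category.assoc, whisker_exchange, T.map_comp, Category.assoc,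
      reassoc_of% (map_leftUnitor_inv_comp_ψ_comp_whiskerRight hψl),
      ← leftUnitor_inv_naturality, reassoc_of% (hTημ Y)]
  simp only [rightWarpAssoc_eq_whiskerLeft_leftFusion, comp_whiskerRight, Category.assoc,
    ← associator_inv_naturality_middle_assoc, ← whiskerLeft_comp_assoc, hunit]
  monoidal

lemma η_comp_leftFusion
    (hηψ : ∀ X Y : V, η (X ⊗ Y) ≫ ψ X Y = η X ⊗ₘ η Y)
    (hημ : ∀ X : V, η (T.obj X) ≫ μ X = 𝟙 (T.obj X))
    (X Y : V) :
    η (X ⊗ T.obj Y) ≫ leftFusion T μ ψ X Y = η X ▷ T.obj Y := by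
  rw [leftFusion, reassoc_of% (hηψ X (T.obj Y)), MonoidalCategory.tensorHom_def,
    Category.assoc, ← whiskerLeft_comp, hημ, whiskerLeft_id, Category.comp_id]

lemma rightWarp_leftUnit
    (hηψ : ∀ X Y : V, η (X ⊗ Y) ≫ ψ X Y = η X ⊗ₘ η Y)
    (hημ : ∀ X : V, η (T.obj X) ≫ μ X = 𝟙 (T.obj X))
    (X Y : V) :
    (η (X ⊗ T.obj Y) ≫ (λ_ (T.obj (X ⊗ T.obj Y))).inv) ≫ rightWarpAssoc T μ ψ (𝟙_ V) X Y =
      (η X ≫ (λ_ (T.obj X)).inv) ▷ T.obj Y := by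
  rw [rightWarpAssoc_eq_whiskerLeft_leftFusion, Category.assoc,
    ← leftUnitor_inv_naturality_assoc, reassoc_of% (η_comp_leftFusion hηψ hημ X Y)]
  monoidal

lemma leftFusion_comp_rightUnitor
    (hψ : ∀ (X X' Y Y' : V) (f : X ⟶ X') (g : Y ⟶ Y'),
      T.map (f ⊗ₘ g) ≫ ψ X' Y' = ψ X Y ≫ (T.map f ⊗ₘ T.map g))
    (hψr : ∀ X : V, ψ X (𝟙_ V) ≫ (T.obj X ◁ ψ₀) ≫ (ρ_ (T.obj X)).hom = T.map (ρ_ X).hom)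
    (hμψ₀ : T.map ψ₀ ≫ ψ₀ = μ (𝟙_ V) ≫ ψ₀)
    (Y : V) :
    leftFusion T μ ψ Y (𝟙_ V) ≫ (T.obj Y ◁ ψ₀) ≫ (ρ_ (T.obj Y)).hom =
      T.map ((Y ◁ ψ₀) ≫ (ρ_ Y).hom) := by
  rw [leftFusion, Category.assoc, ← whiskerLeft_comp_assoc, ← hμψ₀, whiskerLeft_comp_assoc,
    ← reassoc_of% (map_whiskerLeft_comp_ψ hψ), hψr, T.map_comp]

lemma rightWarp_rightUnit
    (hψ : ∀ (X X' Y Y' : V) (f : X ⟶ X') (g : Y ⟶ Y'),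
      T.map (f ⊗ₘ g) ≫ ψ X' Y' = ψ X Y ≫ (T.map f ⊗ₘ T.map g))
    (hψr : ∀ X : V, ψ X (𝟙_ V) ≫ (T.obj X ◁ ψ₀) ≫ (ρ_ (T.obj X)).hom = T.map (ρ_ X).hom)
    (hμψ₀ : T.map ψ₀ ≫ ψ₀ = μ (𝟙_ V) ≫ ψ₀)
    (X Y : V) :
    rightWarpAssoc T μ ψ X Y (𝟙_ V) ≫ (((X ⊗ T.obj Y) ◁ ψ₀) ≫ (ρ_ (X ⊗ T.obj Y)).hom) =
      X ◁ T.map ((Y ◁ ψ₀) ≫ (ρ_ Y).hom) := by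
  rw [rightWarpAssoc_eq_whiskerLeft_leftFusion, ← leftFusion_comp_rightUnitor hψ hψr hμψ₀]
  monoidal

lemma rightWarp_unit_unit (hηψ₀ : η (𝟙_ V) ≫ ψ₀ = 𝟙 (𝟙_ V)) :
    (η (𝟙_ V) ≫ (λ_ (T.obj (𝟙_ V))).inv) ≫ ((𝟙_ V ◁ ψ₀) ≫ (ρ_ (𝟙_ V)).hom) = 𝟙 (𝟙_ V) := by
  rw [Category.assoc, ← leftUnitor_inv_naturality_assoc, unitors_inv_equal,
    Iso.inv_hom_id, Category.comp_id, hηψ₀]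

end

/-- An opmonoidal monad `(T, μ, η, ψ, ψ₀)` on a monoidal category `V`
determines a right skew-monoidal structure on `V` with tensor `X ∗ Y = X ⊗ TY`, unit `I`,
associativity `α' = (1 ⊗ 1 ⊗ μ) ∘ (1 ⊗ ψ)`, left unit `λ' = η` and right unit
`ρ' = 1 ⊗ ψ₀` (each composed with the appropriate unit isomorphism): the five right
skew-monoidal axioms hold. -/
theorem opmonoidal_monad_right_skew_monoidal (T : V ⥤ V)
    (μ : ∀ X : V, T.obj (T.obj X) ⟶ T.obj X) (η : ∀ X : V, X ⟶ T.obj X)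
    (ψ : ∀ X Y : V, T.obj (X ⊗ Y) ⟶ T.obj X ⊗ T.obj Y) (ψ₀ : T.obj (𝟙_ V) ⟶ 𝟙_ V)
    (h : IsOpmonoidalMonad T μ η ψ ψ₀) :
    -- (1) pentagon
    (∀ X Y Z W : V,
      rightWarpAssoc T μ ψ X Y (Z ⊗ T.obj W) ≫
          rightWarpAssoc T μ ψ (X ⊗ T.obj Y) Z W =
        (X ◁ T.map (rightWarpAssoc T μ ψ Y Z W)) ≫
          rightWarpAssoc T μ ψ X (Y ⊗ T.obj Z) W ≫
          (rightWarpAssoc T μ ψ X Y Z ▷ T.obj W)) ∧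
    -- (2)
    (∀ X Y : V,
      (X ◁ T.map (η Y ≫ (λ_ (T.obj Y)).inv)) ≫ rightWarpAssoc T μ ψ X (𝟙_ V) Y ≫
          (((X ◁ ψ₀) ≫ (ρ_ X).hom) ▷ T.obj Y) = 𝟙 (X ⊗ T.obj Y)) ∧
    -- (3)
    (∀ X Y : V,
      (η (X ⊗ T.obj Y) ≫ (λ_ (T.obj (X ⊗ T.obj Y))).inv) ≫
          rightWarpAssoc T μ ψ (𝟙_ V) X Y =
        (η X ≫ (λ_ (T.obj X)).inv) ▷ T.obj Y) ∧
    -- (4)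
    (∀ X Y : V,
      rightWarpAssoc T μ ψ X Y (𝟙_ V) ≫
          (((X ⊗ T.obj Y) ◁ ψ₀) ≫ (ρ_ (X ⊗ T.obj Y)).hom) =
        X ◁ T.map ((Y ◁ ψ₀) ≫ (ρ_ Y).hom)) ∧
    -- (5)
    ((η (𝟙_ V) ≫ (λ_ (T.obj (𝟙_ V))).inv) ≫
        ((𝟙_ V ◁ ψ₀) ≫ (ρ_ (𝟙_ V)).hom) = 𝟙 (𝟙_ V)) := by
  obtain ⟨-, -, hμassoc, hημ, hTημ, hψ, hψassoc, hψl, hψr, hμψ, hμψ₀, hηψ, hηψ₀⟩ := h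
  exact ⟨rightWarpAssoc_pentagon hψ hψassoc hμassoc hμψ, rightWarp_triangle hψl hTημ,
    rightWarp_leftUnit hηψ hημ, rightWarp_rightUnit hψ hψr hμψ₀, rightWarp_unit_unit hηψ₀⟩
end
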